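/- arXiv:1902.06227 — 6 statements merged into one kernel-verified Lean document; each statement's English description precedes it below -/
import Mathlib

section
/- For every real ν, ρ_ν(x) = O(x^(ν/2 − 1/4) e^(−2√x)) as x → +∞. -/
open Real MeasureTheory Filter Asymptotics
open Set

/-- The scaled Macdonald function `ρ_ν(x) = ∫₀^∞ t^(ν−1) e^(−t − x/t) dt`. -/
noncomputable def rho (ν x : ℝ) : ℝ :=
  ∫ t in Set.Ioi (0 : ℝ), t ^ (ν - 1) * Real.exp (-t - x / t)

-- helper: exp(-s) ≤ (K/s)^K
lemma exp_neg_le_pow (K : ℕ) (hK : 0 < K) {s : ℝ} (hs : 0 < s) :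
    Real.exp (-s) ≤ ((K : ℝ) / s) ^ K := by
  have hK' : (0:ℝ) < K := by exact_mod_cast hK
  have hu : 0 < s / K := div_pos hs hK'
  have h1 : Real.exp (-(s / K)) ≤ (K:ℝ) / s := by
    rw [Real.exp_neg]
    rw [inv_le_iff_one_le_mul₀ (Real.exp_pos _)]
    have := (Real.add_one_le_exp (s / K)).trans_eq rfl
    have h2 : s / K ≤ Real.exp (s / K) := by linarith
    calc (1:ℝ) = (s/K) * ((K:ℝ)/s) := by field_simp
    _ ≤ Real.exp (s/K) * ((K:ℝ)/s) := by
        apply mul_le_mul_of_nonneg_right h2 (by positivity)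
    _ = (K:ℝ)/s * Real.exp (s/K) := by ring
  calc Real.exp (-s) = Real.exp (-(s/K)) ^ K := by
        rw [← Real.exp_nat_mul]; congr 1; field_simp
  _ ≤ ((K:ℝ)/s) ^ K := pow_le_pow_left₀ (Real.exp_pos _).le h1 K

lemma rho_meas (ν x : ℝ) : Measurable (fun t : ℝ => t ^ (ν - 1) * Real.exp (-t - x / t)) := by
  fun_prop

lemma rho_eq_toReal (ν x : ℝ) :
    rho ν x
      = (∫⁻ t in Ioi (0:ℝ), ENNReal.ofReal (t ^ (ν - 1) * Real.exp (-t - x / t))).toReal := by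
  rw [rho, MeasureTheory.integral_eq_lintegral_of_nonneg_ae]
  · refine (MeasureTheory.ae_restrict_iff' measurableSet_Ioi).2 (Filter.Eventually.of_forall ?_)
    intro t ht
    exact mul_nonneg (Real.rpow_nonneg (le_of_lt ht) _) (Real.exp_pos _).le
  · exact (rho_meas ν x).aestronglyMeasurable

lemma exp_split {t x : ℝ} (ht : 0 < t) (hx : 0 ≤ x) :
    Real.exp (-t - x / t) = Real.exp (-(2 * Real.sqrt x)) * Real.exp (-((t - Real.sqrt x) ^ 2 / t)) := by
  rw [← Real.exp_add]
  congr 1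
  have h2 : Real.sqrt x ^ 2 = x := Real.sq_sqrt hx
  field_simp
  linear_combination h2

lemma lintegral_factor (ν x : ℝ) (hx : 0 ≤ x) :
    (∫⁻ t in Ioi (0:ℝ), ENNReal.ofReal (t ^ (ν - 1) * Real.exp (-t - x / t)))
      = ENNReal.ofReal (Real.exp (-(2 * Real.sqrt x)))
        * ∫⁻ t in Ioi (0:ℝ),
            ENNReal.ofReal (t ^ (ν - 1) * Real.exp (-((t - Real.sqrt x) ^ 2 / t))) := by
  rw [← MeasureTheory.lintegral_const_mul' _ _ ENNReal.ofReal_ne_top]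
  refine MeasureTheory.setLIntegral_congr_fun measurableSet_Ioi
    (fun t ht => ?_)
  rw [exp_split ht hx, ← ENNReal.ofReal_mul (Real.exp_pos _).le]
  ring_nf

lemma aux1 {t : ℝ} (ht : 0 < t) (K : ℕ) (hK : 0 < K) :
    Real.exp (-(1/(8*t))) ≤ (8*(K:ℝ))^K * t^K := by
  have h := exp_neg_le_pow K hK (s := 1/(8*t)) (by positivity)
  calc Real.exp (-(1/(8*t))) ≤ ((K:ℝ) / (1/(8*t)))^K := h
  _ = (8*(K:ℝ)*t)^K := by congr 1; field_simp
  _ = (8*(K:ℝ))^K * t^K := by rw [mul_pow]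

lemma pointwise1 {ν a t : ℝ} (ha : 1 ≤ a) (K : ℕ) (hK : 0 < K)
    (hβ : 0 ≤ ν - 1 + K) (ht0 : 0 < t) (hta : t ≤ a/2) :
    t ^ (ν - 1) * Real.exp (-((t - a) ^ 2 / t))
      ≤ (8*(K:ℝ))^K * a ^ (ν - 1 + K) * Real.exp (-(a/4)) := by
  have key : 2*a*t + 1 ≤ 8*(t-a)^2 := by
    nlinarith [sq_nonneg (a - 2*t), sq_nonneg (a-1), ht0.le, hta, ha]
  have h1 : a/4 + 1/(8*t) ≤ (t-a)^2/t := by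
    rw [div_add_div _ _ (by norm_num : (4:ℝ) ≠ 0) (by positivity : 8*t ≠ 0),
      div_le_div_iff₀ (by positivity) ht0]
    nlinarith [key, ht0.le]
  have h2 : Real.exp (-((t - a) ^ 2 / t)) ≤ Real.exp (-(a/4)) * Real.exp (-(1/(8*t))) := by
    rw [← Real.exp_add]
    apply Real.exp_le_exp.2
    linarith
  have h3 : Real.exp (-((t - a) ^ 2 / t)) ≤ Real.exp (-(a/4)) * ((8*(K:ℝ))^K * t^K) :=
    h2.trans (mul_le_mul_of_nonneg_left (aux1 ht0 K hK) (Real.exp_pos _).le)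
  calc t ^ (ν - 1) * Real.exp (-((t - a) ^ 2 / t))
      ≤ t ^ (ν - 1) * (Real.exp (-(a/4)) * ((8*(K:ℝ))^K * t^K)) :=
        mul_le_mul_of_nonneg_left h3 (Real.rpow_nonneg ht0.le _)
  _ = (8*(K:ℝ))^K * (t ^ (ν - 1) * t ^ (K:ℝ)) * Real.exp (-(a/4)) := by
        rw [Real.rpow_natCast]; ring
  _ = (8*(K:ℝ))^K * t ^ (ν - 1 + K) * Real.exp (-(a/4)) := by
        rw [← Real.rpow_add ht0]
  _ ≤ (8*(K:ℝ))^K * a ^ (ν - 1 + K) * Real.exp (-(a/4)) := by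
        apply mul_le_mul_of_nonneg_right _ (Real.exp_pos _).le
        apply mul_le_mul_of_nonneg_left _ (by positivity)
        exact Real.rpow_le_rpow ht0.le (by linarith) hβ

lemma piece1 {ν a : ℝ} (ha : 1 ≤ a) (K : ℕ) (hK : 0 < K) (hβ : 0 ≤ ν - 1 + K) :
    (∫⁻ t in Ioc (0:ℝ) (a/2), ENNReal.ofReal (t ^ (ν - 1) * Real.exp (-((t - a) ^ 2 / t))))
      ≤ ENNReal.ofReal ((8*(K:ℝ))^K * a ^ (ν - 1 + K) * Real.exp (-(a/4)) * a) := by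
  have ha0 : (0:ℝ) < a := by linarith
  set C : ℝ := (8*(K:ℝ))^K * a ^ (ν - 1 + K) * Real.exp (-(a/4)) with hCdef
  have hC : 0 ≤ C := by positivity
  calc (∫⁻ t in Ioc (0:ℝ) (a/2), ENNReal.ofReal (t ^ (ν - 1) * Real.exp (-((t - a) ^ 2 / t))))
      ≤ ∫⁻ _t in Ioc (0:ℝ) (a/2), ENNReal.ofReal C := by
        refine MeasureTheory.setLIntegral_mono' measurableSet_Ioc fun t ht => ?_
        exact ENNReal.ofReal_le_ofReal (pointwise1 ha K hK hβ ht.1 ht.2)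
  _ = ENNReal.ofReal C * volume (Ioc (0:ℝ) (a/2)) := by
        rw [MeasureTheory.setLIntegral_const]
  _ ≤ ENNReal.ofReal C * ENNReal.ofReal a := by
        rw [Real.volume_Ioc]
        exact mul_le_mul_right (ENNReal.ofReal_le_ofReal (by linarith)) _
  _ = ENNReal.ofReal (C * a) := (ENNReal.ofReal_mul hC).symm

lemma pointwise2 {ν a t : ℝ} (ha : 1 ≤ a) (ht1 : a/2 < t) (ht2 : t ≤ 2*a) :
    t ^ (ν - 1) * Real.exp (-((t - a) ^ 2 / t))
      ≤ (2:ℝ) ^ |ν - 1| * a ^ (ν - 1) * Real.exp (-(1/(2*a)) * (t - a)^2) := by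
  have ha0 : (0:ℝ) < a := by linarith
  have ht0 : (0:ℝ) < t := by linarith
  have hb : t ^ (ν - 1) ≤ (2:ℝ) ^ |ν - 1| * a ^ (ν - 1) := by
    rcases le_or_gt 1 ν with h | h
    · have h2 : t ^ (ν-1) ≤ (2*a) ^ (ν-1) := Real.rpow_le_rpow ht0.le ht2 (by linarith)
      rw [Real.mul_rpow (by norm_num) ha0.le] at h2
      rwa [abs_of_nonneg (by linarith : (0:ℝ) ≤ ν - 1)]
    · have h2 : t ^ (ν-1) ≤ (a/2) ^ (ν-1) :=
        Real.rpow_le_rpow_of_nonpos (by positivity) ht1.le (by linarith)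
      have h3 : (a/2 : ℝ) ^ (ν-1) = (2:ℝ) ^ |ν - 1| * a ^ (ν - 1) := by
        rw [abs_of_neg (by linarith : ν - 1 < 0), Real.div_rpow ha0.le (by norm_num),
          Real.rpow_neg (by norm_num : (0:ℝ) ≤ 2)]
        field_simp
      rw [← h3]; exact h2
  have hexp : Real.exp (-((t - a) ^ 2 / t)) ≤ Real.exp (-(1/(2*a)) * (t - a)^2) := by
    apply Real.exp_le_exp.2
    have : (t-a)^2 / (2*a) ≤ (t-a)^2 / t :=
      div_le_div_of_nonneg_left (sq_nonneg _) ht0 ht2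
    have he : -(1/(2*a)) * (t - a)^2 = -((t-a)^2/(2*a)) := by ring
    rw [he]
    linarith
  exact mul_le_mul hb hexp (Real.exp_pos _).le (by positivity)

lemma gauss_int {a : ℝ} (ha : 1 ≤ a) :
    (∫ t : ℝ, Real.exp (-(1/(2*a)) * (t - a)^2)) ≤ 3 * a ^ ((1:ℝ)/2) := by
  have ha0 : (0:ℝ) < a := by linarith
  have h1 : (∫ t : ℝ, Real.exp (-(1/(2*a)) * (t - a)^2))
      = ∫ s : ℝ, Real.exp (-(1/(2*a)) * s^2) :=
    integral_sub_right_eq_self (fun s => Real.exp (-(1/(2*a)) * s^2)) a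
  rw [h1, integral_gaussian]
  have h2 : π / (1/(2*a)) = 2*π*a := by field_simp
  rw [h2]
  have h3 : Real.sqrt (2*π*a) ≤ Real.sqrt (8*a) := by
    apply Real.sqrt_le_sqrt
    nlinarith [Real.pi_le_four]
  have h4 : Real.sqrt (8*a) = Real.sqrt 8 * Real.sqrt a := Real.sqrt_mul (by norm_num) a
  have h5 : Real.sqrt 8 ≤ 3 := by
    rw [show (3:ℝ) = Real.sqrt 9 by
      rw [show (9:ℝ) = 3^2 by norm_num, Real.sqrt_sq (by norm_num : (0:ℝ) ≤ 3)]]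
    exact Real.sqrt_le_sqrt (by norm_num)
  have h6 : Real.sqrt a = a ^ ((1:ℝ)/2) := Real.sqrt_eq_rpow a
  calc Real.sqrt (2*π*a) ≤ Real.sqrt 8 * Real.sqrt a := by rw [← h4]; exact h3
  _ ≤ 3 * Real.sqrt a := mul_le_mul_of_nonneg_right h5 (Real.sqrt_nonneg a)
  _ = 3 * a ^ ((1:ℝ)/2) := by rw [h6]

lemma piece2 {ν a : ℝ} (ha : 1 ≤ a) :
    (∫⁻ t in Ioc (a/2) (2*a), ENNReal.ofReal (t ^ (ν - 1) * Real.exp (-((t - a) ^ 2 / t))))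
      ≤ ENNReal.ofReal (3 * (2:ℝ) ^ |ν - 1| * a ^ (ν - 1/2)) := by
  have ha0 : (0:ℝ) < a := by linarith
  have hint : Integrable (fun t : ℝ => Real.exp (-(1/(2*a)) * (t - a)^2)) :=
    (integrable_exp_neg_mul_sq (by positivity : (0:ℝ) < 1/(2*a))).comp_sub_right a
  calc (∫⁻ t in Ioc (a/2) (2*a), ENNReal.ofReal (t ^ (ν - 1) * Real.exp (-((t - a) ^ 2 / t))))
      ≤ ∫⁻ t in Ioc (a/2) (2*a),
          ENNReal.ofReal ((2:ℝ) ^ |ν - 1| * a ^ (ν - 1) * Real.exp (-(1/(2*a)) * (t - a)^2)) := by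
        refine MeasureTheory.setLIntegral_mono' measurableSet_Ioc fun t ht => ?_
        exact ENNReal.ofReal_le_ofReal (pointwise2 ha ht.1 ht.2)
  _ ≤ ∫⁻ t,
        ENNReal.ofReal ((2:ℝ) ^ |ν - 1| * a ^ (ν - 1) * Real.exp (-(1/(2*a)) * (t - a)^2)) :=
        MeasureTheory.setLIntegral_le_lintegral _ _
  _ = ENNReal.ofReal (∫ t : ℝ, (2:ℝ) ^ |ν - 1| * a ^ (ν - 1) * Real.exp (-(1/(2*a)) * (t - a)^2)) := by
        rw [MeasureTheory.ofReal_integral_eq_lintegral_ofReal (hint.const_mul _)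
          (Filter.Eventually.of_forall fun t => by positivity)]
  _ ≤ ENNReal.ofReal (3 * (2:ℝ) ^ |ν - 1| * a ^ (ν - 1/2)) := by
        apply ENNReal.ofReal_le_ofReal
        rw [MeasureTheory.integral_const_mul]
        calc (2:ℝ) ^ |ν - 1| * a ^ (ν - 1) * ∫ t : ℝ, Real.exp (-(1/(2*a)) * (t - a)^2)
            ≤ (2:ℝ) ^ |ν - 1| * a ^ (ν - 1) * (3 * a ^ ((1:ℝ)/2)) := by
              apply mul_le_mul_of_nonneg_left (gauss_int ha) (by positivity)
        _ = 3 * (2:ℝ) ^ |ν - 1| * (a ^ (ν - 1) * a ^ ((1:ℝ)/2)) := by ring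
        _ = 3 * (2:ℝ) ^ |ν - 1| * a ^ (ν - 1/2) := by
              rw [← Real.rpow_add ha0, show ν - 1 + (1:ℝ)/2 = ν - 1/2 by ring]

lemma pointwise3 {ν a t : ℝ} (ha : 1 ≤ a) (K : ℕ) (hK : 0 < K)
    (hν : ν - 1 ≤ (K:ℝ)) (ht : 2*a < t) :
    t ^ (ν - 1) * Real.exp (-((t - a) ^ 2 / t))
      ≤ (8*(K:ℝ))^K * Real.exp (-(a/8)) * Real.exp (-(1/16)*t) := by
  have ht0 : (0:ℝ) < t := by linarith
  have ht1 : (1:ℝ) ≤ t := by linarith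
  have hK' : (0:ℝ) < K := by exact_mod_cast hK
  have hq : t/4 ≤ (t-a)^2/t := by
    rw [div_le_div_iff₀ (by norm_num) ht0]
    nlinarith [ht, ha]
  have hexp : Real.exp (-((t - a) ^ 2 / t))
      ≤ Real.exp (-(t/8)) * (Real.exp (-(a/8)) * Real.exp (-(1/16)*t)) := by
    rw [← Real.exp_add, ← Real.exp_add]
    apply Real.exp_le_exp.2
    linarith
  have hpow : t ^ (ν - 1) ≤ t ^ (K:ℕ) := by
    rw [← Real.rpow_natCast t K]
    exact Real.rpow_le_rpow_of_exponent_le ht1 hν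
  have hup : t ≤ 8*(K:ℝ) * Real.exp (t/(8*K)) := by
    have h1 : t/(8*K) ≤ Real.exp (t/(8*K)) := by
      have := Real.add_one_le_exp (t/(8*K)); linarith
    calc t = (8*(K:ℝ)) * (t/(8*K)) := by field_simp
    _ ≤ 8*(K:ℝ) * Real.exp (t/(8*K)) := by
        apply mul_le_mul_of_nonneg_left h1 (by positivity)
  have hK2 : t ^ (K:ℕ) ≤ (8*(K:ℝ))^K * Real.exp (t/8) := by
    calc t ^ (K:ℕ) ≤ (8*(K:ℝ) * Real.exp (t/(8*K)))^K :=
          pow_le_pow_left₀ ht0.le hup K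
    _ = (8*(K:ℝ))^K * Real.exp (t/(8*K)) ^ K := mul_pow _ _ _
    _ = (8*(K:ℝ))^K * Real.exp (t/8) := by
        rw [← Real.exp_nat_mul]
        congr 2
        field_simp
  calc t ^ (ν - 1) * Real.exp (-((t - a) ^ 2 / t))
      ≤ t ^ (K:ℕ) * (Real.exp (-(t/8)) * (Real.exp (-(a/8)) * Real.exp (-(1/16)*t))) := by
        apply mul_le_mul hpow hexp (Real.exp_pos _).le (by positivity)
  _ ≤ ((8*(K:ℝ))^K * Real.exp (t/8)) * (Real.exp (-(t/8)) * (Real.exp (-(a/8)) * Real.exp (-(1/16)*t))) := by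
        apply mul_le_mul_of_nonneg_right hK2 (by positivity)
  _ = (8*(K:ℝ))^K * Real.exp (-(a/8)) * Real.exp (-(1/16)*t) * (Real.exp (t/8) * Real.exp (-(t/8))) := by
        ring
  _ = (8*(K:ℝ))^K * Real.exp (-(a/8)) * Real.exp (-(1/16)*t) := by
        rw [← Real.exp_add]
        simp

lemma exp_16_int : (∫ t in Ioi (0:ℝ), Real.exp (-(1/16)*t)) = 16 := by
  have h : (fun t : ℝ => Real.exp (-(1/16)*t)) = fun t : ℝ => Real.exp (-((1/16) * t)) := by
    funext t; ring_nf
  rw [h, integral_comp_mul_left_Ioi (fun y => Real.exp (-y)) 0 (by norm_num : (0:ℝ) < 1/16)]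
  simp [Real.exp_zero, integral_exp_neg_Ioi, integral_exp_Iic_zero]

lemma piece3 {ν a : ℝ} (ha : 1 ≤ a) (K : ℕ) (hK : 0 < K) (hν : ν - 1 ≤ (K:ℝ)) :
    (∫⁻ t in Ioi (2*a), ENNReal.ofReal (t ^ (ν - 1) * Real.exp (-((t - a) ^ 2 / t))))
      ≤ ENNReal.ofReal ((8*(K:ℝ))^K * Real.exp (-(a/8)) * 16) := by
  have ha0 : (0:ℝ) < a := by linarith
  calc (∫⁻ t in Ioi (2*a), ENNReal.ofReal (t ^ (ν - 1) * Real.exp (-((t - a) ^ 2 / t))))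
      ≤ ∫⁻ t in Ioi (2*a),
          ENNReal.ofReal ((8*(K:ℝ))^K * Real.exp (-(a/8)) * Real.exp (-(1/16)*t)) := by
        refine MeasureTheory.setLIntegral_mono' measurableSet_Ioi fun t ht => ?_
        exact ENNReal.ofReal_le_ofReal (pointwise3 ha K hK hν ht)
  _ ≤ ∫⁻ t in Ioi (0:ℝ),
          ENNReal.ofReal ((8*(K:ℝ))^K * Real.exp (-(a/8)) * Real.exp (-(1/16)*t)) :=
        MeasureTheory.lintegral_mono_set (Ioi_subset_Ioi (by positivity))
  _ = ENNReal.ofReal (∫ t in Ioi (0:ℝ), (8*(K:ℝ))^K * Real.exp (-(a/8)) * Real.exp (-(1/16)*t)) := by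
        rw [MeasureTheory.ofReal_integral_eq_lintegral_ofReal
          (((exp_neg_integrableOn_Ioi 0 (by norm_num : (0:ℝ) < 1/16))).const_mul _)
          (Filter.Eventually.of_forall fun t => by positivity)]
  _ = ENNReal.ofReal ((8*(K:ℝ))^K * Real.exp (-(a/8)) * 16) := by
        rw [MeasureTheory.integral_const_mul, exp_16_int]

lemma total {ν a : ℝ} (ha : 1 ≤ a) (K : ℕ) (hK : 0 < K) (hβ : 0 ≤ ν - 1 + K)
    (hν : ν - 1 ≤ (K:ℝ)) :
    (∫⁻ t in Ioi (0:ℝ), ENNReal.ofReal (t ^ (ν - 1) * Real.exp (-((t - a) ^ 2 / t))))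
      ≤ ENNReal.ofReal ((8*(K:ℝ))^K * a ^ (ν - 1 + K) * Real.exp (-(a/4)) * a)
        + ENNReal.ofReal (3 * (2:ℝ) ^ |ν - 1| * a ^ (ν - 1/2))
        + ENNReal.ofReal ((8*(K:ℝ))^K * Real.exp (-(a/8)) * 16) := by
  have hs : Ioi (0:ℝ) = (Ioc 0 (a/2) ∪ Ioc (a/2) (2*a)) ∪ Ioi (2*a) := by
    rw [Set.Ioc_union_Ioc_eq_Ioc (by linarith) (by linarith),
      Set.Ioc_union_Ioi_eq_Ioi (by linarith)]
  rw [hs]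
  calc (∫⁻ t in (Ioc (0:ℝ) (a/2) ∪ Ioc (a/2) (2*a)) ∪ Ioi (2*a),
        ENNReal.ofReal (t ^ (ν - 1) * Real.exp (-((t - a) ^ 2 / t))))
      ≤ (∫⁻ t in Ioc (0:ℝ) (a/2) ∪ Ioc (a/2) (2*a),
          ENNReal.ofReal (t ^ (ν - 1) * Real.exp (-((t - a) ^ 2 / t))))
        + ∫⁻ t in Ioi (2*a),
            ENNReal.ofReal (t ^ (ν - 1) * Real.exp (-((t - a) ^ 2 / t))) :=
        MeasureTheory.lintegral_union_le _ _ _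
  _ ≤ ((∫⁻ t in Ioc (0:ℝ) (a/2),
          ENNReal.ofReal (t ^ (ν - 1) * Real.exp (-((t - a) ^ 2 / t))))
        + ∫⁻ t in Ioc (a/2) (2*a),
            ENNReal.ofReal (t ^ (ν - 1) * Real.exp (-((t - a) ^ 2 / t))))
        + ∫⁻ t in Ioi (2*a),
            ENNReal.ofReal (t ^ (ν - 1) * Real.exp (-((t - a) ^ 2 / t))) :=
        add_le_add_left (MeasureTheory.lintegral_union_le _ _ _) _
  _ ≤ _ := by
        exact add_le_add (add_le_add (piece1 ha K hK hβ) (piece2 ha)) (piece3 ha K hK hν)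

lemma ev1 (ν : ℝ) (K : ℕ) (hK : 0 < K) :
    ∀ᶠ a in atTop, (8*(K:ℝ))^K * a ^ (ν - 1 + K) * Real.exp (-(a/4)) * a ≤ a ^ (ν - 1/2) := by
  have hC : (0:ℝ) < (8*(K:ℝ))^K := by positivity
  have h := tendsto_rpow_mul_exp_neg_mul_atTop_nhds_zero ((K:ℝ) + 1/2) (1/4) (by norm_num)
  filter_upwards [h.eventually_lt_const (by positivity : (0:ℝ) < ((8*(K:ℝ))^K)⁻¹),
    eventually_ge_atTop (1:ℝ)] with a hlt ha
  have ha0 : (0:ℝ) < a := by linarith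
  have hsplit : a ^ (ν - 1 + K) * a = a ^ ((K:ℝ) + 1/2) * a ^ (ν - 1/2) := by
    have h0 : a ^ (ν - 1 + (K:ℝ)) * a = a ^ (ν - 1 + (K:ℝ)) * a ^ (1:ℝ) := by
      rw [Real.rpow_one]
    rw [h0, ← Real.rpow_add ha0, ← Real.rpow_add ha0]
    congr 1
    ring
  have hexp : Real.exp (-(a/4)) = Real.exp (-(1/4) * a) := by congr 1; ring
  have key : (8*(K:ℝ))^K * (a ^ ((K:ℝ) + 1/2) * Real.exp (-(1/4) * a)) ≤ 1 := by
    have := le_of_lt hlt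
    calc (8*(K:ℝ))^K * (a ^ ((K:ℝ) + 1/2) * Real.exp (-(1/4) * a))
        ≤ (8*(K:ℝ))^K * ((8*(K:ℝ))^K)⁻¹ := by
          apply mul_le_mul_of_nonneg_left this hC.le
    _ = 1 := mul_inv_cancel₀ hC.ne'
  calc (8*(K:ℝ))^K * a ^ (ν - 1 + K) * Real.exp (-(a/4)) * a
      = ((8*(K:ℝ))^K * (a ^ ((K:ℝ) + 1/2) * Real.exp (-(1/4) * a))) * a ^ (ν - 1/2) := by
        rw [hexp]
        rw [show (8*(K:ℝ))^K * a ^ (ν - 1 + K) * Real.exp (-(1/4) * a) * a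
            = (8*(K:ℝ))^K * (a ^ (ν - 1 + K) * a) * Real.exp (-(1/4) * a) by ring, hsplit]
        ring
  _ ≤ 1 * a ^ (ν - 1/2) := by
        apply mul_le_mul_of_nonneg_right key (Real.rpow_nonneg ha0.le _)
  _ = a ^ (ν - 1/2) := one_mul _

lemma ev2 (ν : ℝ) (K : ℕ) (hK : 0 < K) :
    ∀ᶠ a in atTop, (8*(K:ℝ))^K * Real.exp (-(a/8)) * 16 ≤ a ^ (ν - 1/2) := by
  have hC : (0:ℝ) < 16 * (8*(K:ℝ))^K := by positivity
  have h := tendsto_rpow_mul_exp_neg_mul_atTop_nhds_zero (-(ν - 1/2)) (1/8) (by norm_num)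
  filter_upwards [h.eventually_lt_const (by positivity : (0:ℝ) < (16 * (8*(K:ℝ))^K)⁻¹),
    eventually_ge_atTop (1:ℝ)] with a hlt ha
  have ha0 : (0:ℝ) < a := by linarith
  have hone : a ^ (-(ν - 1/2)) * a ^ (ν - 1/2) = 1 := by
    rw [← Real.rpow_add ha0]; simp
  have hexp : Real.exp (-(a/8)) = Real.exp (-(1/8) * a) := by congr 1; ring
  calc (8*(K:ℝ))^K * Real.exp (-(a/8)) * 16
      = (16 * (8*(K:ℝ))^K) * (a ^ (-(ν - 1/2)) * Real.exp (-(1/8) * a)) * (a ^ (ν - 1/2)) := by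
        rw [hexp, show (16 * (8*(K:ℝ))^K) * (a ^ (-(ν - 1/2)) * Real.exp (-(1/8) * a)) * (a ^ (ν - 1/2))
          = (16 * (8*(K:ℝ))^K) * Real.exp (-(1/8) * a) * (a ^ (-(ν - 1/2)) * a ^ (ν - 1/2)) by ring,
          hone]
        ring
  _ ≤ (16 * (8*(K:ℝ))^K) * (16 * (8*(K:ℝ))^K)⁻¹ * (a ^ (ν - 1/2)) := by
        apply mul_le_mul_of_nonneg_right _ (Real.rpow_nonneg ha0.le _)
        exact mul_le_mul_of_nonneg_left hlt.le hC.le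
  _ = a ^ (ν - 1/2) := by rw [mul_inv_cancel₀ hC.ne', one_mul]

theorem rho_isBigO_atTop (ν : ℝ) :
    (fun x : ℝ => rho ν x) =O[atTop]
      fun x : ℝ => x ^ (ν / 2 - 1 / 4) * Real.exp (-2 * Real.sqrt x) := by
  set K : ℕ := ⌈|ν|⌉₊ + 2 with hKdef
  have hK : 0 < K := by omega
  have hKν : |ν| + 2 ≤ (K:ℝ) := by
    have h := Nat.le_ceil |ν|
    rw [hKdef]; push_cast; linarith
  have hβ : 0 ≤ ν - 1 + (K:ℝ) := by
    have := neg_abs_le ν; linarith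
  have hν' : ν - 1 ≤ (K:ℝ) := by
    have := le_abs_self ν; linarith
  have hsqrt : Tendsto Real.sqrt atTop atTop := by
    have h := tendsto_rpow_atTop (show (0:ℝ) < 1/2 by norm_num)
    exact h.congr fun x => (Real.sqrt_eq_rpow x).symm
  rw [isBigO_iff]
  set C : ℝ := 3 * (2:ℝ) ^ |ν - 1| + 2 with hCdef
  refine ⟨C, ?_⟩
  filter_upwards [eventually_ge_atTop (1:ℝ), hsqrt.eventually (ev1 ν K hK),
    hsqrt.eventually (ev2 ν K hK)] with x hx H1 H2
  have hx0 : (0:ℝ) < x := by linarith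
  set a := Real.sqrt x with ha_def
  have ha : 1 ≤ a := by
    rw [ha_def, show (1:ℝ) = Real.sqrt 1 by simp]
    exact Real.sqrt_le_sqrt hx
  have ha0 : (0:ℝ) < a := by linarith
  have hA : (0:ℝ) ≤ (8*(K:ℝ))^K * a ^ (ν - 1 + K) * Real.exp (-(a/4)) * a := by positivity
  have hB : (0:ℝ) ≤ 3 * (2:ℝ) ^ |ν - 1| * a ^ (ν - 1/2) := by positivity
  have hrho : rho ν x ≤ Real.exp (-(2*a)) * ((3 * (2:ℝ)^|ν - 1| + 2) * a ^ (ν - 1/2)) := by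
    rw [rho_eq_toReal, lintegral_factor ν x hx0.le]
    apply ENNReal.toReal_le_of_le_ofReal (by positivity)
    calc ENNReal.ofReal (Real.exp (-(2*a)))
          * ∫⁻ t in Ioi (0:ℝ), ENNReal.ofReal (t ^ (ν - 1) * Real.exp (-((t - a) ^ 2 / t)))
        ≤ ENNReal.ofReal (Real.exp (-(2*a)))
          * (ENNReal.ofReal ((8*(K:ℝ))^K * a ^ (ν - 1 + K) * Real.exp (-(a/4)) * a)
            + ENNReal.ofReal (3 * (2:ℝ) ^ |ν - 1| * a ^ (ν - 1/2))
            + ENNReal.ofReal ((8*(K:ℝ))^K * Real.exp (-(a/8)) * 16)) :=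
          mul_le_mul_right (total ha K hK hβ hν') _
    _ ≤ ENNReal.ofReal (Real.exp (-(2*a)))
          * ENNReal.ofReal ((3 * (2:ℝ)^|ν - 1| + 2) * a ^ (ν - 1/2)) := by
          apply mul_le_mul_right
          rw [← ENNReal.ofReal_add hA hB, ← ENNReal.ofReal_add (by positivity) (by positivity)]
          apply ENNReal.ofReal_le_ofReal
          have h1 := H1
          have h2 := H2
          linarith
    _ = ENNReal.ofReal (Real.exp (-(2*a)) * ((3 * (2:ℝ)^|ν - 1| + 2) * a ^ (ν - 1/2))) :=
          (ENNReal.ofReal_mul (Real.exp_pos _).le).symm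
  have hpos : 0 ≤ rho ν x :=
    MeasureTheory.setIntegral_nonneg measurableSet_Ioi fun t ht =>
      mul_nonneg (Real.rpow_nonneg (le_of_lt ht) _) (Real.exp_pos _).le
  have hpow : a ^ (ν - 1/2) = x ^ (ν/2 - 1/4) := by
    calc a ^ (ν - 1/2) = (x ^ ((1:ℝ)/2)) ^ (ν - 1/2) := by rw [ha_def, Real.sqrt_eq_rpow]
    _ = x ^ ((1:ℝ)/2 * (ν - 1/2)) := (Real.rpow_mul hx0.le _ _).symm
    _ = x ^ (ν/2 - 1/4) := by congr 1; ring
  rw [Real.norm_eq_abs, Real.norm_eq_abs, abs_of_nonneg hpos,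
    abs_of_nonneg (mul_nonneg (Real.rpow_nonneg hx0.le _) (Real.exp_pos _).le)]
  calc rho ν x ≤ Real.exp (-(2*a)) * ((3 * (2:ℝ)^|ν - 1| + 2) * a ^ (ν - 1/2)) := hrho
  _ = C * (x ^ (ν/2 - 1/4) * Real.exp (-2 * a)) := by
      rw [hCdef]
      rw [hpow, show Real.exp (-(2*a)) = Real.exp (-2 * a) by rw [neg_mul]]
      ring
end

section
/- Let μ, ν be real numbers with μ > −1 and μ + ν > −1. Then ∫₀^∞ e^(−x) ρ_ν(x) x^μ dx = Γ(1+μ) · ∫₀^∞ t^(ν+μ) e^(−t) (1+t)^(−μ−1) dt; in particular all moments of the weight ω⁺_ν(x) = e^(−x) ρ_ν(x) are finite. -/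
open Real MeasureTheory

lemma aux_meas (ν μ : ℝ) :
    Measurable (fun p : ℝ × ℝ =>
      Real.exp (-p.2) * p.2 ^ μ * (p.1 ^ (ν - 1) * Real.exp (-p.1 - p.2 / p.1))) := by
  fun_prop

lemma aux_g_int (ν μ : ℝ) (hμ : μ > -1) (hμν : μ + ν > -1) :
    IntegrableOn (fun t : ℝ => t ^ (ν + μ) * Real.exp (-t) * (1 + t) ^ (-μ - 1))
      (Set.Ioi 0) := by
  have hmeas : Measurable (fun t : ℝ => t ^ (ν + μ) * Real.exp (-t) * (1 + t) ^ (-μ - 1)) := by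
    fun_prop
  have hdom : IntegrableOn (fun t : ℝ => Real.exp (-t) * t ^ (ν + μ)) (Set.Ioi 0) := by
    have := Real.GammaIntegral_convergent (show (0:ℝ) < ν + μ + 1 by linarith)
    simpa using this
  refine hdom.mono' hmeas.aestronglyMeasurable ?_
  filter_upwards [self_mem_ae_restrict measurableSet_Ioi] with t ht
  have ht0 : (0:ℝ) < t := ht
  have h1 : (1 + t) ^ (-μ - 1) ≤ 1 :=
    Real.rpow_le_one_of_one_le_of_nonpos (by linarith) (by linarith)
  have h2 : (0:ℝ) ≤ t ^ (ν + μ) * Real.exp (-t) * (1 + t) ^ (-μ - 1) := by positivity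
  rw [Real.norm_eq_abs, abs_of_nonneg h2]
  calc t ^ (ν + μ) * Real.exp (-t) * (1 + t) ^ (-μ - 1)
      ≤ t ^ (ν + μ) * Real.exp (-t) := by
        apply mul_le_of_le_one_right (by positivity) h1
    _ = Real.exp (-t) * t ^ (ν + μ) := mul_comm _ _

lemma aux_pt (ν μ : ℝ) {t : ℝ} (ht : 0 < t) (x : ℝ) :
    Real.exp (-x) * x ^ μ * (t ^ (ν - 1) * Real.exp (-t - x / t)) =
      (t ^ (ν - 1) * Real.exp (-t)) * (x ^ ((μ + 1) - 1) * Real.exp (-((1 + 1/t) * x))) := by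
  have hexp : Real.exp (-x) * Real.exp (-t - x / t)
      = Real.exp (-t) * Real.exp (-((1 + 1/t) * x)) := by
    rw [← Real.exp_add, ← Real.exp_add]
    congr 1
    field_simp
    ring
  rw [show (μ + 1) - 1 = μ by ring]
  calc Real.exp (-x) * x ^ μ * (t ^ (ν - 1) * Real.exp (-t - x / t))
      = t ^ (ν - 1) * x ^ μ * (Real.exp (-x) * Real.exp (-t - x / t)) := by ring
    _ = t ^ (ν - 1) * x ^ μ * (Real.exp (-t) * Real.exp (-((1 + 1/t) * x))) := by rw [hexp]
    _ = _ := by ring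

lemma aux_inner (ν μ : ℝ) (hμ : μ > -1) {t : ℝ} (ht : 0 < t) :
    ∫ x in Set.Ioi (0:ℝ), Real.exp (-x) * x ^ μ * (t ^ (ν - 1) * Real.exp (-t - x / t)) =
      Real.Gamma (1 + μ) * (t ^ (ν + μ) * Real.exp (-t) * (1 + t) ^ (-μ - 1)) := by
  have h1t : (0:ℝ) < 1 + 1/t := by positivity
  rw [setIntegral_congr_fun measurableSet_Ioi (fun x _ => aux_pt ν μ ht x)]
  rw [integral_const_mul]
  rw [Real.integral_rpow_mul_exp_neg_mul_Ioi (by linarith : (0:ℝ) < μ + 1) h1t]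
  have hdiv : (1:ℝ) / (1 + 1/t) = t / (1 + t) := by
    rw [div_eq_div_iff (ne_of_gt h1t) (by positivity : (1:ℝ) + t ≠ 0)]
    field_simp
    ring
  rw [hdiv, Real.div_rpow ht.le (by positivity : (0:ℝ) ≤ 1 + t)]
  have e1 : t ^ (ν + μ) = t ^ (ν - 1) * t ^ (μ + 1) := by
    rw [← Real.rpow_add ht]
    congr 1
    ring
  have e2 : (1 + t) ^ (-μ - 1) = ((1 + t) ^ (μ + 1))⁻¹ := by
    rw [show -μ - 1 = -(μ + 1) by ring, Real.rpow_neg (by positivity : (0:ℝ) ≤ 1 + t)]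
  rw [e1, e2, div_eq_mul_inv]
  generalize t ^ (ν - 1) = A
  generalize t ^ (μ + 1) = B
  generalize ((1 + t) ^ (μ + 1))⁻¹ = C
  rw [add_comm 1 μ]
  ring

theorem moments_omega_plus (ν μ : ℝ) (hμ : μ > -1) (hμν : μ + ν > -1) :
    IntegrableOn (fun x : ℝ => Real.exp (-x) * rho ν x * x ^ μ) (Set.Ioi 0) ∧
    ∫ x in Set.Ioi (0 : ℝ), Real.exp (-x) * rho ν x * x ^ μ =
      Real.Gamma (1 + μ) *
        ∫ t in Set.Ioi (0 : ℝ), t ^ (ν + μ) * Real.exp (-t) * (1 + t) ^ (-μ - 1) := by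
  set f : ℝ × ℝ → ℝ := fun p =>
    Real.exp (-p.2) * p.2 ^ μ * (p.1 ^ (ν - 1) * Real.exp (-p.1 - p.2 / p.1)) with hf
  set m : Measure ℝ := volume.restrict (Set.Ioi 0) with hm
  have hfmeas : AEStronglyMeasurable f (m.prod m) :=
    (aux_meas ν μ).aestronglyMeasurable
  -- integrability of f on the product
  have hint : Integrable f (m.prod m) := by
    rw [integrable_prod_iff hfmeas]
    constructor
    · filter_upwards [self_mem_ae_restrict measurableSet_Ioi] with t ht
      have ht0 : (0:ℝ) < t := ht
      have h1t : (0:ℝ) < 1 + 1/t := by positivity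
      have base : IntegrableOn (fun x : ℝ => x ^ μ * Real.exp (-((1 + 1/t) * x))) (Set.Ioi 0) := by
        have base0 := integrableOn_rpow_mul_exp_neg_mul_rpow hμ one_pos h1t
        refine base0.congr_fun (fun x _ => ?_) measurableSet_Ioi
        dsimp only
        rw [Real.rpow_one, neg_mul]
      have : IntegrableOn
          (fun x : ℝ => (t ^ (ν - 1) * Real.exp (-t)) *
            (x ^ ((μ + 1) - 1) * Real.exp (-((1 + 1/t) * x)))) (Set.Ioi 0) := by
        apply Integrable.const_mul
        rw [show (μ + 1) - 1 = μ by ring]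
        exact base
      exact this.congr_fun (fun x _ => (aux_pt ν μ ht0 x).symm) measurableSet_Ioi
    · have heq : ∀ᵐ t ∂m, (∫ x, ‖f (t, x)‖ ∂m) =
          Real.Gamma (1 + μ) * (t ^ (ν + μ) * Real.exp (-t) * (1 + t) ^ (-μ - 1)) := by
        filter_upwards [self_mem_ae_restrict measurableSet_Ioi] with t ht
        have ht0 : (0:ℝ) < t := ht
        have : (∫ x, ‖f (t, x)‖ ∂m) = ∫ x in Set.Ioi (0:ℝ),
            Real.exp (-x) * x ^ μ * (t ^ (ν - 1) * Real.exp (-t - x / t)) := by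
          rw [hm]
          refine setIntegral_congr_fun measurableSet_Ioi (fun x hx => ?_)
          have hx0 : (0:ℝ) < x := hx
          have : (0:ℝ) ≤ f (t, x) := by
            simp only [hf]
            positivity
          rw [Real.norm_eq_abs, abs_of_nonneg this]
        rw [this, aux_inner ν μ hμ ht0]
      exact ((aux_g_int ν μ hμ hμν).const_mul (Real.Gamma (1 + μ))).congr (Filter.EventuallyEq.symm heq)
  -- the inner-t integral equals the original integrand
  have hinner : ∀ x : ℝ, (∫ t, f (t, x) ∂m) = Real.exp (-x) * rho ν x * x ^ μ := by
    intro x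
    have : (∫ t, f (t, x) ∂m) =
        (Real.exp (-x) * x ^ μ) * ∫ t in Set.Ioi (0:ℝ), t ^ (ν - 1) * Real.exp (-t - x / t) := by
      rw [hm, ← integral_const_mul]
    rw [this, rho]
    ring
  constructor
  · have h1 : Integrable (fun x => ∫ t, f (t, x) ∂m) m := hint.integral_prod_right
    exact h1.congr (Filter.Eventually.of_forall hinner)
  · have hswap := integral_integral_swap (f := fun t x => f (t, x)) hint
    calc ∫ x in Set.Ioi (0:ℝ), Real.exp (-x) * rho ν x * x ^ μ
        = ∫ x, (∫ t, f (t, x) ∂m) ∂m := by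
          exact (integral_congr_ae (Filter.Eventually.of_forall hinner)).symm
      _ = ∫ t, (∫ x, f (t, x) ∂m) ∂m := hswap.symm
      _ = ∫ t in Set.Ioi (0:ℝ),
            Real.Gamma (1 + μ) * (t ^ (ν + μ) * Real.exp (-t) * (1 + t) ^ (-μ - 1)) := by
          rw [hm]
          refine setIntegral_congr_fun measurableSet_Ioi (fun t ht => ?_)
          exact aux_inner ν μ hμ ht
      _ = Real.Gamma (1 + μ) *
            ∫ t in Set.Ioi (0:ℝ), t ^ (ν + μ) * Real.exp (-t) * (1 + t) ^ (-μ - 1) := by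
          rw [integral_const_mul]
end

section
/- For every n ∈ ℕ and every x > 0, the n-fold Laguerre derivative satisfies (β^n ρ_0)(x) = ρ_0(x) and (β^n ρ_1)(x) = ρ_1(x) − n·ρ_0(x). -/
open Real MeasureTheory

/-- The Laguerre derivative `(βf)(x) = (d/dx)(x · f′(x))`. -/
noncomputable def laguerreDeriv (f : ℝ → ℝ) : ℝ → ℝ :=
  deriv fun x => x * deriv f x

open Set Filter


lemma rho_integrand_integrable (ν : ℝ) {x : ℝ} (hx : 0 < x) :
    IntegrableOn (fun t : ℝ => t ^ (ν - 1) * Real.exp (-t - x / t)) (Set.Ioi 0) := by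
  have hcont : ContinuousOn (fun t : ℝ => t ^ (ν - 1) * Real.exp (-t - x / t)) (Set.Ioi 0) := by
    intro t ht
    have ht0 : (t:ℝ) ≠ 0 := ne_of_gt ht
    exact ((Real.continuousAt_rpow_const t (ν-1) (Or.inl ht0)).mul
      ((Real.continuous_exp.continuousAt).comp
        (((continuousAt_id).neg.sub ((continuousAt_const).div continuousAt_id ht0))))).continuousWithinAt
  have hmeas : AEStronglyMeasurable (fun t : ℝ => t ^ (ν - 1) * Real.exp (-t - x / t))
      (volume.restrict (Set.Ioi 0)) :=
    hcont.aestronglyMeasurable measurableSet_Ioi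
  have hsplit : Set.Ioc (0:ℝ) 1 ∪ Set.Ioi 1 = Set.Ioi 0 := Set.Ioc_union_Ioi_eq_Ioi zero_le_one
  rw [← hsplit]
  apply IntegrableOn.union
  · -- on Ioc 0 1, bounded by k!/x^k
    set k : ℕ := ⌈1 - ν⌉₊ with hk
    apply Integrable.mono' (g := fun _ : ℝ => (k.factorial : ℝ) / x ^ k)
      (integrableOn_const measure_Ioc_lt_top.ne)
    · exact hmeas.mono_measure (Measure.restrict_mono Set.Ioc_subset_Ioi_self le_rfl)
    · filter_upwards [ae_restrict_mem measurableSet_Ioc] with t ht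
      obtain ⟨ht0, ht1⟩ := ht
      have hxt : 0 < x / t := div_pos hx ht0
      have htinv : (1:ℝ) ≤ t⁻¹ := one_le_inv_iff₀.2 ⟨ht0, ht1⟩
      have e1 : t ^ (ν - 1) ≤ t⁻¹ ^ k := by
        rw [show ν - 1 = -(1-ν) by ring, Real.rpow_neg ht0.le, ← Real.inv_rpow ht0.le,
          ← Real.rpow_natCast t⁻¹ k]
        exact Real.rpow_le_rpow_of_exponent_le htinv (Nat.le_ceil _)
      have e2 : Real.exp (-t - x / t) ≤ (k.factorial : ℝ) / (x/t)^k := by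
        have h1 : Real.exp (-t - x/t) ≤ Real.exp (-(x/t)) :=
          Real.exp_le_exp.2 (by linarith)
        have h2 : (x/t)^k / (k.factorial : ℝ) ≤ Real.exp (x/t) :=
          Real.pow_div_factorial_le_exp (x/t) hxt.le k
        have hek : (x/t)^k ≤ Real.exp (x/t) * (k.factorial : ℝ) :=
          (div_le_iff₀ (by positivity)).1 h2
        rw [Real.exp_neg] at h1
        refine h1.trans ?_
        rw [le_div_iff₀ (by positivity)]
        calc (Real.exp (x/t))⁻¹ * (x/t)^k
            ≤ (Real.exp (x/t))⁻¹ * (Real.exp (x/t) * (k.factorial : ℝ)) :=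
              mul_le_mul_of_nonneg_left hek (by positivity)
          _ = (k.factorial : ℝ) := by field_simp
      have hnorm : ‖t ^ (ν - 1) * Real.exp (-t - x / t)‖ = t ^ (ν-1) * Real.exp (-t - x/t) := by
        rw [Real.norm_eq_abs, abs_of_nonneg]; positivity
      rw [hnorm]
      calc t ^ (ν-1) * Real.exp (-t - x/t) ≤ t⁻¹ ^ k * ((k.factorial : ℝ) / (x/t)^k) := by
            apply mul_le_mul e1 e2 (Real.exp_pos _).le (by positivity)
        _ = (k.factorial : ℝ) / x ^ k := by
            rw [div_pow]; field_simp
            rw [← mul_pow, one_div, inv_mul_cancel₀ ht0.ne', one_pow]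
  · -- on Ioi 1, bounded by exp(-t) * t^m
    set m : ℕ := ⌈ν⌉₊ with hm
    have hint : IntegrableOn (fun t : ℝ => Real.exp (-t) * t ^ ((m:ℝ)+1-1)) (Set.Ioi 0) :=
      Real.GammaIntegral_convergent (by positivity)
    apply Integrable.mono' (hint.mono_set (Set.Ioi_subset_Ioi zero_le_one))
    · exact hmeas.mono_measure (Measure.restrict_mono (Set.Ioi_subset_Ioi zero_le_one) le_rfl)
    · filter_upwards [ae_restrict_mem measurableSet_Ioi] with t ht
      have ht1 : (1:ℝ) ≤ t := le_of_lt ht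
      have ht0 : (0:ℝ) < t := lt_of_lt_of_le zero_lt_one ht1
      have hnorm : ‖t ^ (ν - 1) * Real.exp (-t - x / t)‖ = t ^ (ν-1) * Real.exp (-t - x/t) := by
        rw [Real.norm_eq_abs, abs_of_nonneg]; positivity
      rw [hnorm]
      have e1 : t ^ (ν - 1) ≤ t ^ ((m:ℝ)+1-1) := by
        apply Real.rpow_le_rpow_of_exponent_le ht1
        have := Nat.le_ceil ν
        simp only [← hm] at this ⊢
        linarith
      have e2 : Real.exp (-t - x / t) ≤ Real.exp (-t) := by
        apply Real.exp_le_exp.2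
        have : 0 ≤ x / t := le_of_lt (div_pos hx ht0)
        linarith
      calc t ^ (ν-1) * Real.exp (-t - x/t) ≤ t ^ ((m:ℝ)+1-1) * Real.exp (-t) :=
            mul_le_mul e1 e2 (Real.exp_pos _).le (by positivity)
        _ = Real.exp (-t) * t ^ ((m:ℝ)+1-1) := mul_comm _ _

lemma rho_hasDerivAt (ν : ℝ) {x : ℝ} (hx : 0 < x) :
    HasDerivAt (rho ν) (-(rho (ν - 1) x)) x := by
  have hcont : ∀ (c : ℝ) (y : ℝ), AEStronglyMeasurable
      (fun t : ℝ => t ^ (c - 1) * Real.exp (-t - y / t)) (volume.restrict (Set.Ioi 0)) := by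
    intro c y
    apply ContinuousOn.aestronglyMeasurable _ measurableSet_Ioi
    intro t ht
    have ht0 : (t:ℝ) ≠ 0 := ne_of_gt ht
    exact ((Real.continuousAt_rpow_const t (c-1) (Or.inl ht0)).mul
      ((Real.continuous_exp.continuousAt).comp
        (((continuousAt_id).neg.sub ((continuousAt_const).div continuousAt_id ht0))))).continuousWithinAt
  have key := hasDerivAt_integral_of_dominated_loc_of_deriv_le (μ := volume.restrict (Set.Ioi 0))
    (F := fun y t => t ^ (ν - 1) * Real.exp (-t - y / t))
    (F' := fun y t => -(t ^ (ν - 1 - 1) * Real.exp (-t - y / t)))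
    (bound := fun t => t ^ (ν - 1 - 1) * Real.exp (-t - (x/2) / t))
    (x₀ := x) (Metric.ball_mem_nhds x (half_pos hx))
    (Eventually.of_forall fun y => hcont ν y)
    (rho_integrand_integrable ν hx)
    ((hcont (ν - 1) x).neg)
    ?_ (rho_integrand_integrable (ν - 1) (half_pos hx)) ?_
  · have : (∫ t in Set.Ioi (0:ℝ), -(t ^ (ν - 1 - 1) * Real.exp (-t - x / t)))
        = -(rho (ν - 1) x) := by
      rw [integral_neg]; rfl
    rw [this] at key
    exact key.2
  · -- bound
    filter_upwards [ae_restrict_mem measurableSet_Ioi] with t ht y hy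
    have ht0 : (0:ℝ) < t := ht
    have hy2 : x / 2 ≤ y := by
      have := abs_lt.1 (mem_ball_iff_norm.1 hy)
      linarith [this.1]
    rw [norm_neg, Real.norm_eq_abs, abs_of_nonneg (by positivity)]
    apply mul_le_mul_of_nonneg_left _ (by positivity)
    apply Real.exp_le_exp.2
    have : x / 2 / t ≤ y / t := div_le_div_of_nonneg_right hy2 ht0.le
    linarith
  · -- differentiability in y
    filter_upwards [ae_restrict_mem measurableSet_Ioi] with t ht y _
    have ht0 : (0:ℝ) < t := ht
    have h1 : HasDerivAt (fun y : ℝ => -t - y / t) (-t⁻¹) y := by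
      have h := ((hasDerivAt_id' y).div_const t).const_sub (-t)
      exact h.congr_deriv (by simp)
    have h2 : HasDerivAt (fun y : ℝ => t ^ (ν - 1) * Real.exp (-t - y / t))
        (t ^ (ν - 1) * (Real.exp (-t - y / t) * -t⁻¹)) y := (h1.exp).const_mul _
    refine HasDerivAt.congr_deriv h2 ?_
    rw [show ν - 1 - 1 = (ν - 1) + (-1) by ring, Real.rpow_add ht0, Real.rpow_neg_one]
    ring

lemma rho_one_eq {x : ℝ} (hx : 0 < x) : rho 1 x = x * rho (-1) x := by
  set G : ℝ → ℝ := fun t => if t ≤ 0 then 0 else Real.exp (-t - x / t) with hGdef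
  set G' : ℝ → ℝ := fun t => x * (t ^ ((-1:ℝ) - 1) * Real.exp (-t - x / t))
      - t ^ ((1:ℝ) - 1) * Real.exp (-t - x / t) with hG'def
  have hd : ∀ t ∈ Set.Ioi (0:ℝ), HasDerivAt G (G' t) t := by
    intro t ht
    have ht0 : (0:ℝ) < t := ht
    have hinv : HasDerivAt (fun s : ℝ => x / s) (x * (-(t^2)⁻¹)) t := by
      simpa [div_eq_mul_inv] using (hasDerivAt_inv (ne_of_gt ht0)).const_mul x
    have h1 : HasDerivAt (fun s : ℝ => -s - x / s) (-1 - x * (-(t^2)⁻¹)) t :=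
      (hasDerivAt_id t).neg.sub hinv
    have h2 := h1.exp
    have hev : G =ᶠ[nhds t] (fun s : ℝ => Real.exp (-s - x / s)) := by
      filter_upwards [Ioi_mem_nhds ht0] with s hs
      simp [hGdef, not_le.2 (Set.mem_Ioi.1 hs)]
    have h3 := h2.congr_of_eventuallyEq hev
    have e2 : t ^ ((-1:ℝ) - 1) = (t^2)⁻¹ := by
      rw [show ((-1:ℝ) - 1) = -((2:ℕ):ℝ) by norm_num, Real.rpow_neg ht0.le,
        Real.rpow_natCast]
    have e0 : t ^ ((1:ℝ) - 1) = 1 := by norm_num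
    have hEq : G' t = Real.exp (-t - x / t) * (-1 - x * -(t ^ 2)⁻¹) := by
      rw [hG'def]
      dsimp only
      rw [e2, e0]
      ring
    rw [hEq]
    exact h3
  have hcont : ContinuousWithinAt G (Set.Ici 0) 0 := by
    have T : Tendsto (fun t : ℝ => Real.exp (-t - x / t)) (nhdsWithin 0 (Set.Ioi 0)) (nhds 0) := by
      apply Real.tendsto_exp_atBot.comp
      have h1 : Tendsto (fun t : ℝ => x / t) (nhdsWithin 0 (Set.Ioi 0)) atTop := by
        simpa [div_eq_mul_inv] using tendsto_inv_nhdsGT_zero.const_mul_atTop hx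
      have h2 : Tendsto (fun t : ℝ => -(x / t)) (nhdsWithin 0 (Set.Ioi 0)) atBot :=
        tendsto_neg_atTop_atBot.comp h1
      have h3 : Tendsto (fun t : ℝ => -t) (nhdsWithin 0 (Set.Ioi 0)) (nhds 0) := by
        simpa using ((continuous_neg).tendsto (0:ℝ)).mono_left nhdsWithin_le_nhds
      simpa [sub_eq_add_neg] using h3.add_atBot h2
    have h0 : G 0 = 0 := by simp [hGdef]
    rw [ContinuousWithinAt, h0, ← Set.Ioi_insert, nhdsWithin_insert, tendsto_sup]
    constructor
    · simpa [h0] using tendsto_pure_nhds G 0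
    · refine T.congr' ?_
      filter_upwards [self_mem_nhdsWithin] with s hs
      simp [hGdef, not_le.2 (Set.mem_Ioi.1 hs)]
  have htop : Tendsto G atTop (nhds 0) := by
    have T : Tendsto (fun t : ℝ => Real.exp (-t - x / t)) atTop (nhds 0) := by
      apply Real.tendsto_exp_atBot.comp
      have h1 : Tendsto (fun t : ℝ => x / t) atTop (nhds 0) :=
        tendsto_const_nhds.div_atTop tendsto_id
      have h2 : Tendsto (fun t : ℝ => -t) atTop atBot := tendsto_neg_atTop_atBot
      simpa [sub_eq_add_neg] using h2.atBot_add h1.neg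
    refine T.congr' ?_
    filter_upwards [Ioi_mem_atTop (0:ℝ)] with s hs
    simp [hGdef, not_le.2 (Set.mem_Ioi.1 hs)]
  have hint1 : IntegrableOn (fun t : ℝ => x * (t ^ ((-1:ℝ) - 1) * Real.exp (-t - x / t)))
      (Set.Ioi 0) := (rho_integrand_integrable (-1) hx).const_mul x
  have hint2 : IntegrableOn (fun t : ℝ => t ^ ((1:ℝ) - 1) * Real.exp (-t - x / t))
      (Set.Ioi 0) := rho_integrand_integrable 1 hx
  have hint : IntegrableOn G' (Set.Ioi 0) := hint1.sub hint2
  have h0 := integral_Ioi_of_hasDerivAt_of_tendsto hcont hd hint htop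
  have hG0 : G 0 = 0 := by simp [hGdef]
  rw [hG0, sub_zero] at h0
  have : ∫ t in Set.Ioi (0:ℝ), G' t = x * rho (-1) x - rho 1 x := by
    rw [hG'def]
    rw [integral_sub hint1 hint2, integral_const_mul x]
    rfl
  rw [this] at h0
  linarith

lemma lag_congr {f g : ℝ → ℝ} {x : ℝ} (h : f =ᶠ[nhds x] g) :
    laguerreDeriv f x = laguerreDeriv g x := by
  apply Filter.EventuallyEq.deriv_eq
  filter_upwards [h.deriv] with y hy using by rw [hy]

lemma lag_rho0 {x : ℝ} (hx : 0 < x) : laguerreDeriv (rho 0) x = rho 0 x := by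
  unfold laguerreDeriv
  have hev : (fun y => y * deriv (rho 0) y) =ᶠ[nhds x] (fun y => -(rho 1 y)) := by
    filter_upwards [Ioi_mem_nhds hx] with y hy
    have hy0 : (0:ℝ) < y := hy
    rw [(rho_hasDerivAt 0 hy0).deriv, show (0:ℝ) - 1 = -1 by norm_num, mul_neg,
      ← rho_one_eq hy0]
  rw [hev.deriv_eq]
  have h1 : HasDerivAt (fun y => -(rho 1 y)) (-(-(rho (1-1) x))) x := (rho_hasDerivAt 1 hx).neg
  rw [h1.deriv]
  norm_num

lemma lag_rho1_combo (c : ℝ) {x : ℝ} (hx : 0 < x) :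
    laguerreDeriv (fun y => rho 1 y - c * rho 0 y) x = rho 1 x - c * rho 0 x - rho 0 x := by
  unfold laguerreDeriv
  have hev : (fun y => y * deriv (fun z => rho 1 z - c * rho 0 z) y) =ᶠ[nhds x]
      (fun y => c * rho 1 y - y * rho 0 y) := by
    filter_upwards [Ioi_mem_nhds hx] with y hy
    have hy0 : (0:ℝ) < y := hy
    have hd : deriv (fun z => rho 1 z - c * rho 0 z) y = -rho (1 - 1) y - c * -rho (0 - 1) y :=
      ((rho_hasDerivAt 1 hy0).sub ((rho_hasDerivAt 0 hy0).const_mul c)).deriv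
    rw [hd, show (1:ℝ) - 1 = 0 by norm_num, show (0:ℝ) - 1 = -1 by norm_num,
      rho_one_eq hy0]
    ring
  rw [hev.deriv_eq]
  have h1 : HasDerivAt (fun y => c * rho 1 y - y * rho 0 y)
      (c * -(rho (1-1) x) - (1 * rho 0 x + x * -(rho (0-1) x))) x :=
    ((rho_hasDerivAt 1 hx).const_mul c).sub ((hasDerivAt_id x).mul (rho_hasDerivAt 0 hx))
  rw [h1.deriv, show (1:ℝ) - 1 = 0 by norm_num, show (0:ℝ) - 1 = -1 by norm_num,
    rho_one_eq hx]
  ring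

theorem laguerreDeriv_iterate_rho (n : ℕ) (x : ℝ) (hx : 0 < x) :
    (laguerreDeriv^[n] (rho 0)) x = rho 0 x ∧
    (laguerreDeriv^[n] (rho 1)) x = rho 1 x - n * rho 0 x := by
  induction n generalizing x with
  | zero => simp
  | succ n ih =>
    rw [Function.iterate_succ_apply', Function.iterate_succ_apply']
    constructor
    · have hev : laguerreDeriv^[n] (rho 0) =ᶠ[nhds x] rho 0 :=
        eventuallyEq_of_mem (Ioi_mem_nhds hx) (fun y hy => (ih y hy).1)
      rw [lag_congr hev, lag_rho0 hx]
    · have hev : laguerreDeriv^[n] (rho 1) =ᶠ[nhds x]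
          (fun y => rho 1 y - (n:ℝ) * rho 0 y) :=
        eventuallyEq_of_mem (Ioi_mem_nhds hx) (fun y hy => (ih y hy).2)
      rw [lag_congr hev, lag_rho1_combo (n:ℝ) hx]
      push_cast
      ring
end

section
/- (Index law via the Riemann–Liouville fractional integral) For every real ν, every μ > 0 and every x > 0, ρ_(ν+μ)(x) = (1/Γ(μ)) ∫_x^∞ (t−x)^(μ−1) ρ_ν(t) dt; that is, ρ_(ν+μ) = I₋^μ ρ_ν where I₋^μ is the right-sided Riemann–Liouville fractional integral (I₋^μ f)(x) = (1/Γ(μ)) ∫_x^∞ (t−x)^(μ−1) f(t) dt. -/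
open Real MeasureTheory
open Set


lemma rho_cont (a x : ℝ) : ContinuousOn (fun t : ℝ => t ^ (a - 1) * Real.exp (-t - x / t)) (Ioi 0) := by
  apply ContinuousOn.mul
  · exact (continuousOn_id.rpow_const (fun t ht => Or.inl (ne_of_gt ht)))
  · exact (Real.continuous_exp.comp_continuousOn
      ((continuousOn_id.neg).sub (continuousOn_const.div continuousOn_id (fun t ht => ne_of_gt ht))))

lemma rho_integrable (a x : ℝ) (hx : 0 < x) :
    IntegrableOn (fun t : ℝ => t ^ (a - 1) * Real.exp (-t - x / t)) (Ioi 0) := by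
  have h01 : IntegrableOn (fun t : ℝ => t ^ (a - 1) * Real.exp (-t - x / t)) (Ioc 0 1) := by
    obtain ⟨m, hm⟩ := exists_nat_ge (1 - a)
    refine Integrable.mono' (g := fun _ => (m.factorial : ℝ) / x ^ m)
      (integrableOn_const measure_Ioc_lt_top.ne)
      (((rho_cont a x).mono Ioc_subset_Ioi_self).aestronglyMeasurable measurableSet_Ioc) ?_
    refine (ae_restrict_iff' measurableSet_Ioc).2 (Filter.Eventually.of_forall fun t ht => ?_)
    have ht0 : 0 < t := ht.1
    have hE : (0:ℝ) < Real.exp (x / t) := Real.exp_pos _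
    have htm : (0:ℝ) < t ^ m := by positivity
    have hxm : (0:ℝ) < x ^ m := by positivity
    have h1 : t ^ (a - 1) ≤ t ^ (-(m : ℝ)) := by
      apply Real.rpow_le_rpow_of_exponent_ge ht0 ht.2
      linarith
    have h2 : (x / t) ^ m / (m.factorial : ℝ) ≤ Real.exp (x / t) :=
      Real.pow_div_factorial_le_exp _ (by positivity) m
    have key : x ^ m ≤ (Real.exp (x / t) * t ^ m) * m.factorial := by
      rw [div_pow, div_le_iff₀ (by positivity : (0:ℝ) < (m.factorial : ℝ))] at h2
      rw [div_le_iff₀ htm] at h2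
      nlinarith
    have h3 : t ^ (-(m : ℝ)) = (t ^ m)⁻¹ := by
      rw [Real.rpow_neg ht0.le, Real.rpow_natCast]
    have h4 : Real.exp (-t - x / t) ≤ Real.exp (-(x / t)) := by
      apply Real.exp_le_exp.2; linarith
    rw [Real.norm_eq_abs, abs_of_nonneg (by positivity)]
    calc t ^ (a - 1) * Real.exp (-t - x / t)
        ≤ (t ^ m)⁻¹ * (Real.exp (x / t))⁻¹ := by
          rw [← h3, ← Real.exp_neg]
          exact mul_le_mul h1 h4 (Real.exp_pos _).le (by positivity)
      _ = (Real.exp (x / t) * t ^ m)⁻¹ := by rw [mul_inv]; ring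
      _ ≤ (m.factorial : ℝ) / x ^ m := by
          rw [le_div_iff₀ hxm, inv_mul_le_iff₀ (by positivity)]
          exact key
  have h1i : IntegrableOn (fun t : ℝ => t ^ (a - 1) * Real.exp (-t - x / t)) (Ioi 1) := by
    obtain ⟨n, hn⟩ := exists_nat_ge (a - 1)
    refine Integrable.mono' (g := fun t => ((n.factorial : ℝ) * 2 ^ n) * Real.exp (-(1/2) * t))
      (((exp_neg_integrableOn_Ioi 1 (by norm_num : (0:ℝ) < 1/2)).const_mul _))
      (((rho_cont a x).mono fun t (ht : t ∈ Ioi 1) => lt_trans one_pos ht).aestronglyMeasurable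
        measurableSet_Ioi) ?_
    refine (ae_restrict_iff' measurableSet_Ioi).2 (Filter.Eventually.of_forall fun t ht => ?_)
    have ht1 : (1:ℝ) < t := ht
    have ht0 : (0:ℝ) < t := lt_trans one_pos ht1
    rw [Real.norm_eq_abs, abs_of_nonneg (by positivity)]
    have h1 : t ^ (a - 1) ≤ t ^ (n : ℝ) :=
      Real.rpow_le_rpow_of_exponent_le ht1.le hn
    have h2 : (t / 2) ^ n / (n.factorial : ℝ) ≤ Real.exp (t / 2) :=
      Real.pow_div_factorial_le_exp _ (by positivity) n
    have key : t ^ n ≤ (n.factorial : ℝ) * 2 ^ n * Real.exp (t / 2) := by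
      rw [div_le_iff₀ (by positivity : (0:ℝ) < (n.factorial : ℝ)), div_pow,
        div_le_iff₀ (by positivity : (0:ℝ) < (2:ℝ) ^ n)] at h2
      nlinarith
    have h4 : Real.exp (-t - x / t) ≤ Real.exp (-t) := by
      apply Real.exp_le_exp.2
      have : 0 < x / t := by positivity
      linarith
    calc t ^ (a - 1) * Real.exp (-t - x / t)
        ≤ t ^ n * Real.exp (-t) := by
          rw [← Real.rpow_natCast t n]
          exact mul_le_mul h1 h4 (Real.exp_pos _).le (Real.rpow_nonneg ht0.le _)
      _ ≤ ((n.factorial : ℝ) * 2 ^ n * Real.exp (t / 2)) * Real.exp (-t) :=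
          mul_le_mul_of_nonneg_right key (Real.exp_pos _).le
      _ = ((n.factorial : ℝ) * 2 ^ n) * Real.exp (-(1/2) * t) := by
          rw [mul_assoc, ← Real.exp_add]; ring_nf
  have := h01.union h1i
  rwa [Ioc_union_Ioi_eq_Ioi (by norm_num : (0:ℝ) ≤ 1)] at this

lemma shift_int (x : ℝ) (f : ℝ → ℝ) :
    ∫ u in Ioi (0:ℝ), f (u + x) = ∫ t in Ioi x, f t := by
  have h := (measurePreserving_add_right volume x).setIntegral_preimage_emb
    (measurableEmbedding_addRight x) f (Ioi x)
  simpa using h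

lemma restrict_eq_map (x : ℝ) :
    (volume : Measure ℝ).restrict (Ioi x) =
      Measure.map (· + x) ((volume : Measure ℝ).restrict (Ioi 0)) := by
  have hp : (fun u : ℝ => u + x) ⁻¹' Ioi x = Ioi 0 := by
    rw [preimage_add_const_Ioi]; simp
  rw [← hp, ← Measure.restrict_map (measurable_add_const x) measurableSet_Ioi,
    map_add_right_eq_self]

lemma inner_integrable (μ x s : ℝ) (hμ : 0 < μ) (hs : 0 < s) :
    IntegrableOn (fun t : ℝ => (t - x) ^ (μ - 1) * Real.exp (-(t / s))) (Ioi x) := by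
  have h : IntegrableOn (fun u : ℝ => u ^ (μ - 1) * Real.exp (-((1:ℝ)/s) * u ^ (1:ℝ))) (Ioi 0) :=
    integrableOn_rpow_mul_exp_neg_mul_rpow (by linarith) one_pos (by positivity)
  rw [IntegrableOn, restrict_eq_map x, (measurableEmbedding_addRight x).integrable_map_iff]
  have h2 := (h.const_mul (Real.exp (-(x/s))))
  apply (integrableOn_congr_fun ?_ measurableSet_Ioi).2 h2
  intro u hu
  simp only [Function.comp_apply, Real.rpow_one]
  rw [add_sub_cancel_right,
    show -((u + x)/s) = -(x/s) + -(1/s * u) by ring, Real.exp_add]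
  ring
lemma inner_eval (μ x s : ℝ) (hμ : 0 < μ) (hs : 0 < s) :
    ∫ t in Ioi x, (t - x) ^ (μ - 1) * Real.exp (-(t / s)) =
      Real.Gamma μ * s ^ μ * Real.exp (-(x / s)) := by
  rw [← shift_int x]
  have : ∀ u ∈ Ioi (0:ℝ), (u + x - x) ^ (μ - 1) * Real.exp (-((u + x) / s)) =
      Real.exp (-(x/s)) * (u ^ (μ - 1) * Real.exp (-((1/s) * u))) := by
    intro u hu
    rw [add_sub_cancel_right,
      show -((u + x)/s) = -(x/s) + -(1/s * u) by ring, Real.exp_add]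
    ring
  rw [setIntegral_congr_fun measurableSet_Ioi this, integral_const_mul,
    integral_rpow_mul_exp_neg_mul_Ioi hμ (by positivity : (0:ℝ) < 1/s)]
  rw [one_div_one_div]
  ring
theorem rho_index_law (ν μ : ℝ) (hμ : 0 < μ) (x : ℝ) (hx : 0 < x) :
    rho (ν + μ) x =
      (1 / Real.Gamma μ) * ∫ t in Set.Ioi x, (t - x) ^ (μ - 1) * rho ν t := by

  set F : ℝ → ℝ → ℝ := fun s t => (t - x) ^ (μ - 1) * (s ^ (ν - 1) * Real.exp (-s - t / s))
    with hF
  have hGamma : Real.Gamma μ ≠ 0 := (Real.Gamma_pos_of_pos hμ).ne'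
  -- key pointwise factorization
  have hfac : ∀ s ∈ Ioi (0:ℝ), ∀ t : ℝ, F s t =
      (s ^ (ν - 1) * Real.exp (-s)) * ((t - x) ^ (μ - 1) * Real.exp (-(t / s))) := by
    intro s hs t
    show (t - x) ^ (μ - 1) * (s ^ (ν - 1) * Real.exp (-s - t / s)) = _
    rw [show -s - t/s = -s + -(t/s) by ring, Real.exp_add]
    ring
  -- slice integrability in t, for each s > 0
  have hslice : ∀ s ∈ Ioi (0:ℝ), IntegrableOn (fun t => F s t) (Ioi x) := by
    intro s hs
    refine (integrableOn_congr_fun (fun t _ => hfac s hs t) measurableSet_Ioi).2 ?_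
    exact (inner_integrable μ x s hμ hs).const_mul _
  -- slice integral value
  have hsliceval : ∀ s ∈ Ioi (0:ℝ),
      ∫ t in Ioi x, F s t = Real.Gamma μ * (s ^ (ν + μ - 1) * Real.exp (-s - x / s)) := by
    intro s hs
    rw [setIntegral_congr_fun measurableSet_Ioi (fun t _ => hfac s hs t), integral_const_mul,
      inner_eval μ x s hμ hs]
    have hs0 : (0:ℝ) < s := hs
    rw [show ν + μ - 1 = (ν - 1) + μ by ring, Real.rpow_add hs0,
      show -s - x/s = -s + -(x/s) by ring, Real.exp_add]
    ring
  -- measurability on the product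
  have hmeas : AEStronglyMeasurable (Function.uncurry F)
      ((volume.restrict (Ioi (0:ℝ))).prod (volume.restrict (Ioi x))) := by
    rw [Measure.prod_restrict]
    apply ContinuousOn.aestronglyMeasurable ?_ (measurableSet_Ioi.prod measurableSet_Ioi)
    apply ContinuousOn.mul
    · exact ContinuousOn.rpow_const ((continuous_snd.sub continuous_const).continuousOn)
        (fun p hp => Or.inl (sub_ne_zero.2 (ne_of_gt hp.2)))
    · apply ContinuousOn.mul
      · exact ContinuousOn.rpow_const continuous_fst.continuousOn
          (fun p hp => Or.inl (ne_of_gt hp.1))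
      · exact Real.continuous_exp.comp_continuousOn
          ((continuous_fst.neg.continuousOn).sub
            (continuous_snd.continuousOn.div continuous_fst.continuousOn
              (fun p hp => ne_of_gt hp.1)))
  -- nonnegativity on the relevant region
  have hnn : ∀ s ∈ Ioi (0:ℝ), ∀ t ∈ Ioi x, 0 ≤ F s t := by
    intro s hs t ht
    have h1 : (0:ℝ) < t - x := sub_pos.2 ht
    have h2 : (0:ℝ) < s := hs
    positivity
  -- integrability on the product
  have hint : Integrable (Function.uncurry F)
      ((volume.restrict (Ioi (0:ℝ))).prod (volume.restrict (Ioi x))) := by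
    rw [integrable_prod_iff hmeas]
    constructor
    · exact (ae_restrict_iff' measurableSet_Ioi).2
        (Filter.Eventually.of_forall fun s hs => hslice s hs)
    · have heq : ∀ s ∈ Ioi (0:ℝ),
          (∫ t in Ioi x, ‖F s t‖) = Real.Gamma μ * (s ^ (ν + μ - 1) * Real.exp (-s - x / s)) := by
        intro s hs
        rw [← hsliceval s hs]
        refine setIntegral_congr_fun measurableSet_Ioi (fun t ht => ?_)
        exact norm_of_nonneg (hnn s hs t ht)
      refine Integrable.congr (((rho_integrable (ν + μ) x hx).const_mul (Real.Gamma μ))) ?_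
      exact (ae_restrict_iff' measurableSet_Ioi).2
        (Filter.Eventually.of_forall fun s hs => (heq s hs).symm)
  -- Fubini
  have hswap := integral_integral_swap (f := F) hint
  -- evaluate the LHS of hswap
  have hlhs : (∫ s in Ioi (0:ℝ), ∫ t in Ioi x, F s t) = Real.Gamma μ * rho (ν + μ) x := by
    rw [setIntegral_congr_fun measurableSet_Ioi (fun s hs => hsliceval s hs), integral_const_mul]
    rfl
  -- evaluate the RHS of hswap
  have hrhs : (∫ t in Ioi x, ∫ s in Ioi (0:ℝ), F s t)
      = ∫ t in Ioi x, (t - x) ^ (μ - 1) * rho ν t := by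
    refine setIntegral_congr_fun measurableSet_Ioi (fun t ht => ?_)
    rw [hF]
    simp only []
    rw [integral_const_mul]
    rfl
  rw [hlhs, hrhs] at hswap
  rw [← hswap]
  field_simp
end

section
/- For every ν > −1, every n ∈ ℕ and every x > 0, the n-fold companion operator applied to the function x ↦ x^ν e^(−x) satisfies θ^n { x^ν e^(−x) } = n! · x^(n+ν) · e^(−x) · L_n^ν(x). -/
open Real

/-- The companion operator `(θf)(x) = x · (d/dx)(x · f(x))`. -/
noncomputable def thetaOp (f : ℝ → ℝ) : ℝ → ℝ :=
  fun x => x * deriv (fun y => y * f y) x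

/-- The associated Laguerre polynomial
`L_n^ν(x) = ∑_{k=0}^n ((−1)^k/k!)·(Γ(n+ν+1)/(Γ(k+ν+1)·(n−k)!))·x^k`. -/
noncomputable def assocLaguerre (ν : ℝ) (n : ℕ) (x : ℝ) : ℝ :=
  ∑ k ∈ Finset.range (n + 1),
    ((-1 : ℝ) ^ k / k.factorial) *
      (Real.Gamma (n + ν + 1) / (Real.Gamma (k + ν + 1) * (n - k).factorial)) * x ^ k

/-- The coefficient `n!·(−1)^k/k!·Γ(n+ν+1)/(Γ(k+ν+1)(n−k)!)`. -/
noncomputable def cC (ν : ℝ) (n k : ℕ) : ℝ :=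
  (n.factorial : ℝ) * ((-1 : ℝ) ^ k / k.factorial) *
    (Real.Gamma (n + ν + 1) / (Real.Gamma (k + ν + 1) * (n - k).factorial))

lemma gamma_pos' (ν : ℝ) (hν : ν > -1) (n : ℕ) : 0 < Real.Gamma ((n : ℝ) + ν + 1) := by
  apply Real.Gamma_pos_of_pos
  have : (0:ℝ) ≤ n := Nat.cast_nonneg n
  linarith

lemma gamma_step (ν : ℝ) (hν : ν > -1) (n : ℕ) :
    Real.Gamma ((n : ℝ) + 1 + ν + 1) = ((n : ℝ) + ν + 1) * Real.Gamma ((n : ℝ) + ν + 1) := by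
  have hne : (n : ℝ) + ν + 1 ≠ 0 := ne_of_gt (by have : (0:ℝ) ≤ n := Nat.cast_nonneg n; linarith)
  rw [show (n : ℝ) + 1 + ν + 1 = ((n : ℝ) + ν + 1) + 1 by ring, Real.Gamma_add_one hne]

lemma coeff_rec (ν : ℝ) (hν : ν > -1) (n j : ℕ) (hj : j < n + 2) :
    cC ν (n+1) j =
      (if j ≤ n then ((n : ℝ) + j + 1 + ν) * cC ν n j else 0) -
      (if 1 ≤ j then cC ν n (j-1) else 0) := by
  have hΓν : ∀ m : ℕ, Real.Gamma ((m : ℝ) + ν + 1) ≠ 0 := fun m => (gamma_pos' ν hν m).ne'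
  rcases Nat.eq_or_lt_of_le (Nat.lt_succ_iff.mp hj) with hjn | hjn
  · -- j = n + 1
    subst hjn
    simp only [Nat.lt_irrefl, if_neg (by omega : ¬ n + 1 ≤ n), if_pos (by omega : 1 ≤ n + 1),
      Nat.add_sub_cancel]
    unfold cC
    rw [Nat.sub_self, Nat.sub_self]
    push_cast
    have h1 := hΓν (n+1)
    push_cast at h1
    have h2 := hΓν n
    field_simp
    ring
  · -- j ≤ n
    have hjn' : j ≤ n := by omega
    rw [if_pos hjn']
    by_cases hj1 : 1 ≤ j
    swap
    · obtain rfl : j = 0 := by omega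
      rw [if_neg (by omega), sub_zero]
      have c0 : ∀ m : ℕ, cC ν m 0 = Real.Gamma ((m:ℝ) + ν + 1) / Real.Gamma (ν + 1) := by
        intro m
        have hf : ((m).factorial : ℝ) ≠ 0 := Nat.cast_ne_zero.mpr (Nat.factorial_ne_zero _)
        unfold cC
        rw [Nat.sub_zero]
        simp only [pow_zero, Nat.factorial_zero, Nat.cast_one, Nat.cast_zero]
        rw [show (0:ℝ) + ν + 1 = ν + 1 by ring]
        field_simp
      rw [c0 (n+1), c0 n]
      push_cast
      rw [show (n:ℝ) + 1 + ν + 1 = ((n:ℝ) + ν + 1) + 1 by ring,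
        Real.Gamma_add_one (ne_of_gt (by have : (0:ℝ) ≤ (n:ℝ) := Nat.cast_nonneg n; linarith)),
        mul_div_assoc]
      ring
    · rw [if_pos hj1]
      obtain ⟨m, rfl⟩ : ∃ m, j = m + 1 := ⟨j - 1, by omega⟩
      obtain ⟨r, rfl⟩ : ∃ r, n = m + 1 + r := ⟨n - (m+1), by omega⟩
      simp only [Nat.add_sub_cancel]
      unfold cC
      rw [show (m+1+r+1) - (m+1) = r+1 by omega, show (m+1+r) - (m+1) = r by omega,
          show (m+1+r) - m = r+1 by omega]
      have hg1 : Real.Gamma (((m+1+r+1 : ℕ) : ℝ) + ν + 1)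
          = (((m+1+r : ℕ) : ℝ) + ν + 1) * Real.Gamma (((m+1+r : ℕ) : ℝ) + ν + 1) := by
        have := gamma_step ν hν (m+1+r); push_cast at this ⊢; convert this using 2 <;> ring
      have hg2 : Real.Gamma (((m+1 : ℕ) : ℝ) + ν + 1)
          = (((m : ℕ) : ℝ) + ν + 1) * Real.Gamma (((m : ℕ) : ℝ) + ν + 1) := by
        have := gamma_step ν hν m; push_cast at this ⊢; convert this using 2 <;> ring
      push_cast at hg1 hg2 ⊢
      rw [hg1, hg2]
      have hA := hΓν (m+1+r); push_cast at hA
      have hB := hΓν m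
      have hmν : (m : ℝ) + ν + 1 ≠ 0 := ne_of_gt (by have : (0:ℝ) ≤ (m:ℝ) := Nat.cast_nonneg m; linarith)
      have hf1 : ((m+1).factorial : ℝ) ≠ 0 := Nat.cast_ne_zero.mpr (Nat.factorial_ne_zero _)
      have hf2 : ((m).factorial : ℝ) ≠ 0 := Nat.cast_ne_zero.mpr (Nat.factorial_ne_zero _)
      have hf3 : ((r+1).factorial : ℝ) ≠ 0 := Nat.cast_ne_zero.mpr (Nat.factorial_ne_zero _)
      have hf4 : ((r).factorial : ℝ) ≠ 0 := Nat.cast_ne_zero.mpr (Nat.factorial_ne_zero _)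
      have hf5 : ((m+1+r+1).factorial : ℝ) ≠ 0 := Nat.cast_ne_zero.mpr (Nat.factorial_ne_zero _)
      have hf6 : ((m+1+r).factorial : ℝ) ≠ 0 := Nat.cast_ne_zero.mpr (Nat.factorial_ne_zero _)
      have e1 : ((m+1).factorial : ℝ) = (m+1) * m.factorial := by
        rw [Nat.factorial_succ]; push_cast; ring
      have e2 : ((r+1).factorial : ℝ) = (r+1) * r.factorial := by
        rw [Nat.factorial_succ]; push_cast; ring
      have e3 : ((m+1+r+1).factorial : ℝ) = (m+1+r+1) * (m+1+r).factorial := by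
        rw [Nat.factorial_succ]; push_cast; ring
      rw [e1, e2, e3]
      field_simp
      ring

lemma hasDerivAt_g' (a x : ℝ) (hx : 0 < x) :
    HasDerivAt (fun y : ℝ => y ^ a * Real.exp (-y))
      (a * x ^ (a - 1) * Real.exp (-x) - x ^ a * Real.exp (-x)) x := by
  have h1 : HasDerivAt (fun y : ℝ => y ^ a) (a * x ^ (a - 1)) x :=
    Real.hasDerivAt_rpow_const (Or.inl hx.ne')
  have h2 : HasDerivAt (fun y : ℝ => Real.exp (-y)) (-Real.exp (-x)) x := by
    simpa [Function.comp_def] using (Real.hasDerivAt_exp (-x)).comp x (hasDerivAt_neg x)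
  have : HasDerivAt (fun y : ℝ => y ^ a * Real.exp (-y))
      (a * x ^ (a - 1) * Real.exp (-x) + x ^ a * -Real.exp (-x)) x := h1.fun_mul h2
  convert this using 1
  ring

lemma key (ν : ℝ) (hν : ν > -1) (n : ℕ) :
    ∀ x : ℝ, 0 < x →
      (thetaOp^[n] fun y => y ^ ν * Real.exp (-y)) x
        = ∑ k ∈ Finset.range (n+1), cC ν n k * (x ^ ((n:ℝ) + k + ν) * Real.exp (-x)) := by
  induction n with
  | zero =>
    intro x hx
    simp only [Function.iterate_zero, id_eq]
    have h1 : cC ν 0 0 = 1 := by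
      unfold cC
      have hg : Real.Gamma (ν + 1) ≠ 0 := by
        have := (gamma_pos' ν hν 0).ne'; simpa using this
      push_cast
      field_simp
      simp [hg]
    rw [Finset.sum_range_one, h1, one_mul,
      show ((0:ℕ):ℝ) + ((0:ℕ):ℝ) + ν = ν by push_cast; ring]
  | succ n ih =>
    intro x hx
    rw [Function.iterate_succ_apply']
    show x * deriv (fun y => y * (thetaOp^[n] fun y => y ^ ν * Real.exp (-y)) y) x = _
    set F : ℝ → ℝ := fun y =>
      ∑ k ∈ Finset.range (n+1), cC ν n k * (y ^ ((n:ℝ) + k + ν + 1) * Real.exp (-y)) with hF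
    have hev : (fun y => y * (thetaOp^[n] fun y => y ^ ν * Real.exp (-y)) y) =ᶠ[nhds x] F := by
      filter_upwards [isOpen_Ioi.mem_nhds (Set.mem_Ioi.mpr hx)] with y hy
      have hy' : (0:ℝ) < y := hy
      rw [ih y hy', hF, Finset.mul_sum]
      refine Finset.sum_congr rfl fun k _ => ?_
      rw [Real.rpow_add_one hy'.ne']
      ring
    have hD : HasDerivAt F
        (∑ k ∈ Finset.range (n+1), cC ν n k *
          (((n:ℝ) + k + ν + 1) * x ^ ((n:ℝ) + k + ν + 1 - 1) * Real.exp (-x)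
            - x ^ ((n:ℝ) + k + ν + 1) * Real.exp (-x))) x := by
      apply HasDerivAt.fun_sum
      intro k _
      exact (hasDerivAt_g' _ x hx).const_mul _
    rw [hev.deriv_eq, hD.deriv, Finset.mul_sum]
    set T : ℕ → ℝ := fun j => x ^ ((n:ℝ) + 1 + j + ν) * Real.exp (-x) with hT
    have hxp : ∀ b : ℝ, x * x ^ b = x ^ (b + 1) := fun b => by
      rw [Real.rpow_add_one hx.ne', mul_comm]
    have step1 : ∀ k ∈ Finset.range (n+1),
        x * (cC ν n k *
          (((n:ℝ) + k + ν + 1) * x ^ ((n:ℝ) + k + ν + 1 - 1) * Real.exp (-x)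
            - x ^ ((n:ℝ) + k + ν + 1) * Real.exp (-x)))
        = ((n:ℝ) + k + 1 + ν) * cC ν n k * T k - cC ν n k * T (k+1) := by
      intro k _
      rw [hT]
      simp only
      rw [show (n:ℝ) + k + ν + 1 - 1 = (n:ℝ) + k + ν by ring,
          show (n:ℝ) + 1 + (k:ℝ) + ν = (n:ℝ) + k + ν + 1 by ring,
          show (n:ℝ) + 1 + ((k:ℕ)+1 : ℕ) + ν = ((n:ℝ) + k + ν + 1) + 1 by push_cast; ring]
      linear_combination (cC ν n k * ((n:ℝ) + (k:ℝ) + ν + 1) * Real.exp (-x)) * hxp ((n:ℝ) + k + ν)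
        - (cC ν n k * Real.exp (-x)) * hxp ((n:ℝ) + k + ν + 1)
    rw [Finset.sum_congr rfl step1, Finset.sum_sub_distrib]
    have e1 : ∑ k ∈ Finset.range (n+1), ((n:ℝ) + k + 1 + ν) * cC ν n k * T k
        = ∑ k ∈ Finset.range (n+2), (if k ≤ n then ((n:ℝ) + k + 1 + ν) * cC ν n k else 0) * T k := by
      rw [Finset.sum_range_succ (fun k => (if k ≤ n then ((n:ℝ) + k + 1 + ν) * cC ν n k else 0) * T k)]
      rw [if_neg (by omega), zero_mul, add_zero]
      refine Finset.sum_congr rfl fun k hk => ?_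
      rw [if_pos (by simpa [Nat.lt_succ_iff] using hk)]
    have e2 : ∑ k ∈ Finset.range (n+1), cC ν n k * T (k+1)
        = ∑ k ∈ Finset.range (n+2), (if 1 ≤ k then cC ν n (k-1) else 0) * T k := by
      rw [Finset.sum_range_succ' (fun k => (if 1 ≤ k then cC ν n (k-1) else 0) * T k) (n+1)]
      rw [if_neg (by omega), zero_mul, add_zero]
      refine Finset.sum_congr rfl fun k _ => ?_
      rw [if_pos (by omega), Nat.add_sub_cancel]
    rw [e1, e2, ← Finset.sum_sub_distrib]
    refine Finset.sum_congr rfl fun k hk => ?_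
    rw [← sub_mul, ← coeff_rec ν hν n k (Finset.mem_range.mp hk), hT]
    simp only
    rw [show ((n+1:ℕ):ℝ) + (k:ℝ) + ν = (n:ℝ) + 1 + k + ν by push_cast; ring]

theorem theta_iterate_weight (ν : ℝ) (hν : ν > -1) (n : ℕ) (x : ℝ) (hx : 0 < x) :
    (thetaOp^[n] fun y => y ^ ν * Real.exp (-y)) x =
      n.factorial * x ^ ((n : ℝ) + ν) * Real.exp (-x) * assocLaguerre ν n x := by
  rw [key ν hν n x hx]
  unfold assocLaguerre
  rw [Finset.mul_sum]
  refine Finset.sum_congr rfl fun k _ => ?_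
  unfold cC
  rw [show (n:ℝ) + (k:ℝ) + ν = ((n:ℝ) + ν) + (k:ℝ) by ring, Real.rpow_add hx,
    Real.rpow_natCast]
  ring
end

section
/- For every ν > −1, every n ∈ ℕ and every x > 0, one has ((−1)^n x^n / n!) · ρ_ν(x) = ∫₀^∞ t^(ν+n−1) e^(−t − x/t) L_n^ν(t) dt. -/
open Real MeasureTheory

open Set Filter Topology

lemma integrableOn_aux (μ : ℝ) {x : ℝ} (hx : 0 < x) :
    IntegrableOn (fun t => t ^ (μ - 1) * Real.exp (-t - x / t)) (Set.Ioi 0) := by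
  obtain ⟨N, hN⟩ := exists_nat_ge (1 - μ)
  obtain ⟨M, hM⟩ := exists_nat_ge (μ - 1)
  have hgi : IntegrableOn
      (fun t => (N.factorial * x ^ (-(N:ℝ))) * Real.exp (-t) + Real.exp (-t) * t ^ ((M:ℝ)))
      (Set.Ioi 0) := by
    apply Integrable.add
    · have h1 : IntegrableOn (fun t : ℝ => (N.factorial * x ^ (-(N:ℝ))) * Real.exp (-1 * t))
          (Set.Ioi 0) := (exp_neg_integrableOn_Ioi 0 one_pos).const_mul _
      exact h1.congr_fun (fun t _ => by norm_num) measurableSet_Ioi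
    · have := Real.GammaIntegral_convergent (s := (M:ℝ) + 1) (by positivity)
      simpa [IntegrableOn] using this
  have hmeas : AEStronglyMeasurable (fun t : ℝ => t ^ (μ - 1) * Real.exp (-t - x / t))
      (volume.restrict (Set.Ioi 0)) := by
    apply ContinuousOn.aestronglyMeasurable _ measurableSet_Ioi
    apply ContinuousOn.mul
    · exact fun t ht => (Real.continuousAt_rpow_const t _ (Or.inl (ne_of_gt ht))).continuousWithinAt
    · exact (Real.continuous_exp.comp_continuousOn
        ((continuous_neg.continuousOn).sub
          (continuousOn_const.div continuousOn_id fun t ht => ne_of_gt ht)))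
  apply Integrable.mono' hgi hmeas
  rw [ae_restrict_iff' measurableSet_Ioi]
  filter_upwards with t ht
  have ht' : (0:ℝ) < t := ht
  have hnn : 0 ≤ t ^ (μ - 1) * Real.exp (-t - x / t) := by positivity
  rw [Real.norm_of_nonneg hnn]
  have hsplit : Real.exp (-t - x / t) = Real.exp (-t) * Real.exp (-(x / t)) := by
    rw [← Real.exp_add]; ring_nf
  rcases le_or_gt t 1 with h1 | h1
  · have key : t ^ (μ - 1) * Real.exp (-(x / t)) ≤ N.factorial * x ^ (-(N:ℝ)) := by
      have hxt : 0 < x / t := by positivity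
      have hexp : (x / t) ^ N / N.factorial ≤ Real.exp (x / t) :=
        Real.pow_div_factorial_le_exp _ hxt.le N
      have hfac : (0:ℝ) < N.factorial := by positivity
      have hinv : Real.exp (-(x / t)) ≤ N.factorial * t ^ N / x ^ N := by
        rw [Real.exp_neg]
        have h3 : ((x / t) ^ N / N.factorial)⁻¹ = N.factorial * t ^ N / x ^ N := by
          rw [div_pow]; field_simp
        rw [← h3]
        exact inv_anti₀ (by positivity) hexp
      calc t ^ (μ - 1) * Real.exp (-(x / t)) ≤ t ^ (μ - 1) * (N.factorial * t ^ N / x ^ N) := by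
            apply mul_le_mul_of_nonneg_left hinv (by positivity)
        _ = (N.factorial * x ^ (-(N:ℝ))) * (t ^ (μ - 1) * t ^ (N:ℝ)) := by
            rw [Real.rpow_neg hx.le, Real.rpow_natCast, Real.rpow_natCast]; field_simp
        _ = (N.factorial * x ^ (-(N:ℝ))) * t ^ (μ - 1 + N) := by
            rw [Real.rpow_add ht']
        _ ≤ (N.factorial * x ^ (-(N:ℝ))) * 1 := by
            apply mul_le_mul_of_nonneg_left _ (by positivity)
            exact Real.rpow_le_one ht'.le h1 (by linarith)
        _ = N.factorial * x ^ (-(N:ℝ)) := mul_one _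
    calc t ^ (μ - 1) * Real.exp (-t - x / t)
        = (t ^ (μ - 1) * Real.exp (-(x / t))) * Real.exp (-t) := by rw [hsplit]; ring
      _ ≤ (N.factorial * x ^ (-(N:ℝ))) * Real.exp (-t) := by
          apply mul_le_mul_of_nonneg_right key (Real.exp_pos _).le
      _ ≤ _ := by
          have : 0 ≤ Real.exp (-t) * t ^ ((M:ℝ)) := by positivity
          linarith
  · have key : t ^ (μ - 1) ≤ t ^ ((M:ℝ)) :=
      Real.rpow_le_rpow_of_exponent_le h1.le (by linarith)
    calc t ^ (μ - 1) * Real.exp (-t - x / t)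
        ≤ t ^ ((M:ℝ)) * Real.exp (-t) := by
          apply mul_le_mul key _ (Real.exp_pos _).le (by positivity)
          rw [Real.exp_le_exp]
          have : 0 < x / t := by positivity
          linarith
      _ ≤ _ := by
          have : 0 ≤ (N.factorial * x ^ (-(N:ℝ))) * Real.exp (-t) := by positivity
          linarith [mul_comm (Real.exp (-t)) (t ^ ((M:ℝ)))]

lemma tendsto_atTop_aux (μ : ℝ) {x : ℝ} (hx : 0 < x) :
    Tendsto (fun t : ℝ => t ^ μ * Real.exp (-t - x / t)) atTop (𝓝 0) := by
  have h := tendsto_rpow_mul_exp_neg_mul_atTop_nhds_zero μ 1 one_pos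
  apply squeeze_zero' (g := fun t : ℝ => t ^ μ * Real.exp (-(1:ℝ) * t))
  · filter_upwards [eventually_gt_atTop (0:ℝ)] with t ht
    positivity
  · filter_upwards [eventually_gt_atTop (0:ℝ)] with t ht
    apply mul_le_mul_of_nonneg_left _ (by positivity)
    rw [Real.exp_le_exp]
    have : 0 < x / t := by positivity
    linarith
  · exact h

lemma tendsto_zero_aux (μ : ℝ) {x : ℝ} (hx : 0 < x) :
    Tendsto (fun t : ℝ => t ^ μ * Real.exp (-t - x / t)) (nhdsWithin 0 (Set.Ioi 0)) (𝓝 0) := by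
  have h1 : Tendsto (fun t : ℝ => t ^ μ * Real.exp (-(x / t))) (nhdsWithin 0 (Set.Ioi 0)) (𝓝 0) := by
    have h2 : Tendsto (fun u : ℝ => u ^ (-μ) * Real.exp (-x * u)) atTop (𝓝 0) :=
      tendsto_rpow_mul_exp_neg_mul_atTop_nhds_zero (-μ) x hx
    have h3 : Tendsto (fun t : ℝ => t⁻¹) (nhdsWithin 0 (Set.Ioi 0)) atTop :=
      tendsto_inv_nhdsGT_zero
    have h4 := h2.comp h3
    apply h4.congr'
    filter_upwards [self_mem_nhdsWithin] with t (ht : 0 < t)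
    simp only [Function.comp_apply]
    rw [Real.inv_rpow ht.le, Real.rpow_neg ht.le, inv_inv]
    ring_nf
  have h2 : Tendsto (fun t : ℝ => Real.exp (-t)) (nhdsWithin 0 (Set.Ioi 0)) (𝓝 1) := by
    have := (Real.continuous_exp.comp continuous_neg).tendsto (0:ℝ)
    simpa [Function.comp_def] using this.mono_left nhdsWithin_le_nhds
  have := h1.mul h2
  rw [zero_mul] at this
  apply this.congr
  intro t
  rw [show -t - x / t = -(x / t) + -t by ring, Real.exp_add]
  rw [Real.exp_neg, Real.exp_neg]
  ring


lemma rho_rec (μ : ℝ) {x : ℝ} (hx : 0 < x) :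
    rho (μ + 1) x = μ * rho μ x + x * rho (μ - 1) x := by
  set F : ℝ → ℝ := fun t => if t ≤ 0 then 0 else t ^ μ * Real.exp (-t - x / t) with hF
  set f' : ℝ → ℝ := fun t =>
    μ * (t ^ (μ - 1) * Real.exp (-t - x / t)) - t ^ (μ + 1 - 1) * Real.exp (-t - x / t)
      + x * (t ^ (μ - 1 - 1) * Real.exp (-t - x / t)) with hf'
  have hi1 := integrableOn_aux μ hx
  have hi2 := integrableOn_aux (μ + 1) hx
  have hi3 := integrableOn_aux (μ - 1) hx
  have f'int : IntegrableOn f' (Set.Ioi 0) := (((hi1.const_mul μ).sub hi2).add (hi3.const_mul x))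
  have hderiv : ∀ t ∈ Set.Ioi (0:ℝ), HasDerivAt F (f' t) t := by
    intro t ht
    have ht' : (0:ℝ) < t := ht
    have h1 : HasDerivAt (fun s : ℝ => s ^ μ) (μ * t ^ (μ - 1)) t :=
      Real.hasDerivAt_rpow_const (Or.inl (ne_of_gt ht'))
    have h2 : HasDerivAt (fun s : ℝ => -s - x / s) (-1 + x / t ^ 2) t := by
      have ha : HasDerivAt (fun s : ℝ => x / s) (x * (-(t ^ 2)⁻¹)) t := by
        simpa [div_eq_mul_inv] using (hasDerivAt_inv (ne_of_gt ht')).const_mul x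
      have hb : HasDerivAt (fun s : ℝ => -s) (-1 : ℝ) t := (hasDerivAt_id t).neg
      have := hb.sub ha
      refine this.congr_deriv ?_
      ring
    have h3 : HasDerivAt (fun s : ℝ => Real.exp (-s - x / s))
        (Real.exp (-t - x / t) * (-1 + x / t ^ 2)) t := h2.exp
    have h4 := h1.mul h3
    have hEq : F =ᶠ[𝓝 t] fun s => s ^ μ * Real.exp (-s - x / s) := by
      filter_upwards [eventually_gt_nhds ht'] with s hs
      simp [hF, not_le.mpr hs]
    apply HasDerivAt.congr_of_eventuallyEq _ hEq
    refine h4.congr_deriv ?_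
    have e1 : t ^ (μ - 1) = t ^ μ / t := by
      rw [Real.rpow_sub ht', Real.rpow_one]
    have e2 : t ^ (μ - 1 - 1) = t ^ μ / t / t := by
      rw [Real.rpow_sub ht', Real.rpow_sub ht', Real.rpow_one]
    have e3 : t ^ (μ + 1 - 1) = t ^ μ := by norm_num
    rw [hf']
    simp only [e1, e2, e3]
    field_simp
    ring
  have hcont : ContinuousWithinAt F (Set.Ici 0) 0 := by
    have h0 : F 0 = 0 := by simp [hF]
    unfold ContinuousWithinAt
    rw [h0]
    rw [show Set.Ici (0:ℝ) = insert 0 (Set.Ioi 0) by rw [Set.Ioi_insert], nhdsWithin_insert,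
      tendsto_sup]
    constructor
    · simpa [h0] using tendsto_pure_nhds F 0
    · exact (tendsto_zero_aux μ hx).congr' (by
        filter_upwards [self_mem_nhdsWithin] with s (hs : 0 < s)
        simp [hF, not_le.mpr hs])
  have htop : Tendsto F atTop (𝓝 0) := by
    apply (tendsto_atTop_aux μ hx).congr'
    filter_upwards [eventually_gt_atTop (0:ℝ)] with s hs
    simp [hF, not_le.mpr hs]
  have key := integral_Ioi_of_hasDerivAt_of_tendsto hcont hderiv f'int htop
  have h0 : F 0 = 0 := by simp [hF]
  rw [h0, sub_zero] at key
  have hsplit : ∫ t in Set.Ioi (0:ℝ), f' t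
      = μ * rho μ x - rho (μ + 1) x + x * rho (μ - 1) x := by
    rw [hf']
    have h1 : IntegrableOn (fun t : ℝ =>
        μ * (t ^ (μ - 1) * Real.exp (-t - x / t)) - t ^ (μ + 1 - 1) * Real.exp (-t - x / t))
        (Set.Ioi 0) := (hi1.const_mul μ).sub hi2
    have h2 : IntegrableOn (fun t : ℝ => x * (t ^ (μ - 1 - 1) * Real.exp (-t - x / t)))
        (Set.Ioi 0) := hi3.const_mul x
    rw [integral_add h1 h2, integral_sub (hi1.const_mul μ) hi2, integral_const_mul, integral_const_mul]
    rfl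
  rw [hsplit] at key
  linarith

noncomputable def cf (ν : ℝ) (n k : ℕ) : ℝ :=
  ((-1 : ℝ) ^ k / k.factorial) *
    (Real.Gamma (n + ν + 1) / (Real.Gamma (k + ν + 1) * (n - k).factorial))

lemma Gamma_pos_aux {ν : ℝ} (hν : ν > -1) (m : ℕ) : 0 < Real.Gamma ((m : ℝ) + ν + 1) :=
  Real.Gamma_pos_of_pos (by have : (0:ℝ) ≤ m := Nat.cast_nonneg m; linarith)

lemma Gamma_succ_aux {ν : ℝ} (hν : ν > -1) (m : ℕ) :
    Real.Gamma ((m : ℝ) + 1 + ν + 1) = ((m : ℝ) + ν + 1) * Real.Gamma ((m : ℝ) + ν + 1) := by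
  rw [show (m : ℝ) + 1 + ν + 1 = ((m : ℝ) + ν + 1) + 1 by ring]
  exact Real.Gamma_add_one (by have : (0:ℝ) ≤ m := Nat.cast_nonneg m; linarith)

lemma alg_aux (P M ν Ga Gb A B C : ℝ) (hA : A ≠ 0) (hB : B ≠ 0) (hM : M + 1 ≠ 0)
    (hP : P + 1 ≠ 0) (hMν : M + ν + 1 ≠ 0) (hGb : Gb ≠ 0) :
    (P + M + 1 + 1) * ((-C) / ((M + 1) * A) *
        ((P + M + 1 + ν + 1) * Ga / ((M + ν + 1) * Gb * ((P + 1) * B)))) =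
      (ν + (P + M + 1) + (M + 1) + 1) * ((-C) / ((M + 1) * A) *
          (Ga / ((M + ν + 1) * Gb * B)))
        - C / A * (Ga / (Gb * ((P + 1) * B))) := by
  field_simp
  ring

set_option maxHeartbeats 1000000 in
lemma cf_rec {ν : ℝ} (hν : ν > -1) (n j : ℕ) (hj : j ≤ n + 1) :
    ((n : ℝ) + 1) * cf ν (n + 1) j =
      (ν + n + j + 1) * (if j ≤ n then cf ν n j else 0)
        - (if j = 0 then 0 else cf ν n (j - 1)) := by
  have hΓn := Gamma_pos_aux hν n
  rcases Nat.eq_zero_or_pos j with rfl | hjpos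
  · simp only [if_pos (Nat.zero_le n), if_pos rfl]
    unfold cf
    push_cast
    rw [Gamma_succ_aux hν n]
    have hΓν : (0:ℝ) < Real.Gamma (ν + 1) := Real.Gamma_pos_of_pos (by linarith)
    simp only [Nat.sub_zero, Nat.cast_zero, pow_zero, Nat.factorial_zero]
    rw [show ((0:ℝ) + ν + 1) = ν + 1 by ring]
    rw [Nat.factorial_succ]
    have hfn : ((n.factorial : ℝ)) ≠ 0 := Nat.cast_ne_zero.mpr (Nat.factorial_ne_zero n)
    field_simp
    push_cast
    ring
  · obtain ⟨m, rfl⟩ : ∃ m, j = m + 1 := ⟨j - 1, by omega⟩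
    rcases Nat.lt_or_ge m n with hmn | hmn
    · -- m + 1 ≤ n
      obtain ⟨p, hp⟩ : ∃ p, n = p + m + 1 := ⟨n - m - 1, by omega⟩
      subst hp
      rw [if_pos (by omega), if_neg (by omega)]
      unfold cf
      have h0m : (0:ℝ) ≤ m := Nat.cast_nonneg m
      have h0p : (0:ℝ) ≤ p := Nat.cast_nonneg p
      have e1 : p + m + 1 + 1 - (m + 1) = p + 1 := by omega
      have e2 : p + m + 1 - (m + 1) = p := by omega
      have e3 : p + m + 1 - m = p + 1 := by omega
      simp only [e1, e2, Nat.add_sub_cancel]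
      rw [e3]
      have hΓm := Gamma_pos_aux hν m
      push_cast
      have G2eq : Real.Gamma ((p:ℝ) + ↑m + 1 + 1 + ν + 1)
          = ((p:ℝ) + ↑m + 1 + ν + 1) * Real.Gamma ((p:ℝ) + ↑m + 1 + ν + 1) := by
        rw [show ((p:ℝ) + ↑m + 1 + 1 + ν + 1) = ((p:ℝ) + ↑m + 1 + ν + 1) + 1 by ring,
          Real.Gamma_add_one (ne_of_gt (by linarith))]
      have G1eq : Real.Gamma ((m:ℝ) + 1 + ν + 1)
          = ((m:ℝ) + ν + 1) * Real.Gamma ((m:ℝ) + ν + 1) := by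
        rw [show ((m:ℝ) + 1 + ν + 1) = ((m:ℝ) + ν + 1) + 1 by ring,
          Real.Gamma_add_one (ne_of_gt (by linarith))]
      have f1 : ((m+1).factorial : ℝ) = (↑m + 1) * m.factorial := by
        rw [Nat.factorial_succ]; push_cast; ring
      have f2 : ((p+1).factorial : ℝ) = (↑p + 1) * p.factorial := by
        rw [Nat.factorial_succ]; push_cast; ring
      rw [G2eq, G1eq, f1, f2]
      have hm : ((m.factorial : ℝ)) ≠ 0 := Nat.cast_ne_zero.mpr (Nat.factorial_ne_zero m)
      have hpf : ((p.factorial : ℝ)) ≠ 0 := Nat.cast_ne_zero.mpr (Nat.factorial_ne_zero p)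
      have halg := alg_aux (p:ℝ) (m:ℝ) ν (Real.Gamma ((p:ℝ) + ↑m + 1 + ν + 1))
        (Real.Gamma ((m:ℝ) + ν + 1)) (m.factorial : ℝ) (p.factorial : ℝ) ((-1:ℝ) ^ m)
        hm hpf (by positivity) (by positivity) (ne_of_gt (by linarith)) hΓm.ne'
      linear_combination halg
    · -- j = n + 1
      obtain rfl : m = n := by omega
      rw [if_neg (by omega), if_neg (by omega)]
      unfold cf
      have e1 : m + 1 - (m + 1) = 0 := by omega
      have e3 : m - m = 0 := by omega
      simp only [e1, e3, Nat.add_sub_cancel]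
      have hΓm1 := Gamma_pos_aux hν (m + 1)
      push_cast at hΓm1 ⊢
      have hm : ((m.factorial : ℝ)) ≠ 0 := Nat.cast_ne_zero.mpr (Nat.factorial_ne_zero m)
      have f1 : ((m+1).factorial : ℝ) = (m+1) * m.factorial := by
        rw [Nat.factorial_succ]; push_cast; ring
      rw [f1]
      have hΓm1' : Real.Gamma ((m:ℝ) + 1 + ν + 1) ≠ 0 := hΓm1.ne'
      field_simp
      ring

set_option maxHeartbeats 1000000 in
lemma sum_cf_rho {ν : ℝ} (hν : ν > -1) {x : ℝ} (hx : 0 < x) (n : ℕ) :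
    ∑ k ∈ Finset.range (n + 1), cf ν n k * rho (ν + n + k) x
      = (-1:ℝ) ^ n * x ^ n / n.factorial * rho ν x := by
  induction n with
  | zero =>
      have hΓ : Real.Gamma ((0:ℝ) + ν + 1) ≠ 0 := by
        have := (Gamma_pos_aux hν 0).ne'; push_cast at this; exact this
      rw [Finset.sum_range_one]
      simp only [cf, Nat.cast_zero, pow_zero, Nat.factorial_zero, Nat.cast_one, Nat.sub_zero]
      rw [show ν + 0 + 0 = ν by ring]
      rw [zero_add] at hΓ
      field_simp
      rw [zero_add]
      exact mul_div_cancel_left₀ _ hΓ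
  | succ n ih =>
      have hn1 : ((n:ℝ) + 1) ≠ 0 := by positivity
      apply mul_left_cancel₀ hn1
      have step1 : ∀ j ∈ Finset.range (n+2),
          ((n:ℝ)+1) * (cf ν (n+1) j * rho (ν + ↑(n+1) + ↑j) x)
          = (ν + ↑n + ↑j + 1) * ((if j ≤ n then cf ν n j else 0) * rho (ν + ↑n + 1 + ↑j) x)
            - (if j = 0 then 0 else cf ν n (j-1)) * rho (ν + ↑n + 1 + ↑j) x := by
        intro j hj
        rw [Finset.mem_range] at hj
        have hc := cf_rec hν n j (by omega)
        have harg : ν + ((n:ℝ)+1) + ↑j = ν + ↑n + 1 + ↑j := by ring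
        push_cast
        rw [harg, ← mul_assoc, hc]
        ring
      calc ((n:ℝ)+1) * ∑ j ∈ Finset.range (n+2), cf ν (n+1) j * rho (ν + ↑(n+1) + ↑j) x
          = ∑ j ∈ Finset.range (n+2),
              ((ν + ↑n + ↑j + 1) * ((if j ≤ n then cf ν n j else 0) * rho (ν + ↑n + 1 + ↑j) x)
                - (if j = 0 then 0 else cf ν n (j-1)) * rho (ν + ↑n + 1 + ↑j) x) := by
            rw [Finset.mul_sum]; exact Finset.sum_congr rfl step1
        _ = (∑ j ∈ Finset.range (n+2),
              (ν + ↑n + ↑j + 1) * ((if j ≤ n then cf ν n j else 0) * rho (ν + ↑n + 1 + ↑j) x))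
            - ∑ j ∈ Finset.range (n+2),
              (if j = 0 then 0 else cf ν n (j-1)) * rho (ν + ↑n + 1 + ↑j) x :=
            Finset.sum_sub_distrib _ _
        _ = (∑ j ∈ Finset.range (n+1),
              (ν + ↑n + ↑j + 1) * (cf ν n j * rho (ν + ↑n + 1 + ↑j) x))
            - ∑ i ∈ Finset.range (n+1), cf ν n i * rho (ν + ↑n + 1 + (↑i + 1)) x := by
            have hA : (∑ j ∈ Finset.range (n+2),
                (ν + ↑n + ↑j + 1) * ((if j ≤ n then cf ν n j else 0) * rho (ν + ↑n + 1 + ↑j) x))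
                = ∑ j ∈ Finset.range (n+1),
                  (ν + ↑n + ↑j + 1) * (cf ν n j * rho (ν + ↑n + 1 + ↑j) x) := by
              rw [Finset.sum_range_succ, if_neg (by omega : ¬ (n+1 ≤ n))]
              simp only [zero_mul, mul_zero, add_zero]
              apply Finset.sum_congr rfl
              intro j hj
              rw [Finset.mem_range] at hj
              rw [if_pos (by omega : j ≤ n)]
            have hB : (∑ j ∈ Finset.range (n+2),
                (if j = 0 then 0 else cf ν n (j-1)) * rho (ν + ↑n + 1 + ↑j) x)
                = ∑ i ∈ Finset.range (n+1), cf ν n i * rho (ν + ↑n + 1 + (↑i + 1)) x := by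
              rw [Finset.sum_range_succ']
              simp only [ite_true, if_true, zero_mul, add_zero]
              apply Finset.sum_congr rfl
              intro i hi
              rw [if_neg (by omega : ¬ (i + 1 = 0))]
              simp only [Nat.add_sub_cancel]
              push_cast
              ring_nf
            rw [hA, hB]
        _ = ∑ k ∈ Finset.range (n+1), cf ν n k * (-(x * rho (ν + ↑n + ↑k) x)) := by
            rw [← Finset.sum_sub_distrib]
            apply Finset.sum_congr rfl
            intro k hk
            have hr := rho_rec (ν + ↑n + ↑k + 1) hx
            rw [show ν + ↑n + ↑k + 1 - 1 = ν + ↑n + ↑k by ring] at hr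
            rw [show ν + ↑n + 1 + ((k:ℝ) + 1) = ν + ↑n + ↑k + 1 + 1 by ring,
              show ν + ↑n + 1 + (k:ℝ) = ν + ↑n + ↑k + 1 by ring, hr]
            ring
        _ = -x * ∑ k ∈ Finset.range (n+1), cf ν n k * rho (ν + ↑n + ↑k) x := by
            rw [Finset.mul_sum]
            apply Finset.sum_congr rfl
            intro k _
            ring
        _ = ((n:ℝ)+1) * ((-1:ℝ) ^ (n+1) * x ^ (n+1) / (n+1).factorial * rho ν x) := by
            rw [ih, Nat.factorial_succ]
            have hfn : ((n.factorial : ℝ)) ≠ 0 := Nat.cast_ne_zero.mpr (Nat.factorial_ne_zero n)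
            push_cast
            field_simp
            ring


theorem rho_laguerre_integral (ν : ℝ) (hν : ν > -1) (n : ℕ) (x : ℝ) (hx : 0 < x) :
    ((-1 : ℝ) ^ n * x ^ n / n.factorial) * rho ν x =
      ∫ t in Set.Ioi (0 : ℝ),
        t ^ (ν + n - 1) * Real.exp (-t - x / t) * assocLaguerre ν n t := by
  have hcong : ∀ t ∈ Set.Ioi (0:ℝ),
      t ^ (ν + n - 1) * Real.exp (-t - x / t) * assocLaguerre ν n t
        = ∑ k ∈ Finset.range (n + 1),
            cf ν n k * (t ^ ((ν + n + k) - 1) * Real.exp (-t - x / t)) := by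
    intro t ht
    have ht' : (0:ℝ) < t := ht
    unfold assocLaguerre
    rw [Finset.mul_sum]
    apply Finset.sum_congr rfl
    intro k _
    unfold cf
    have hpow : t ^ ((ν + n + k) - 1) = t ^ (ν + n - 1) * t ^ k := by
      rw [← Real.rpow_natCast t k, ← Real.rpow_add ht']
      congr 1
      ring
    rw [hpow]
    ring
  rw [setIntegral_congr_fun measurableSet_Ioi hcong]
  rw [MeasureTheory.integral_finset_sum (Finset.range (n+1))
      (f := fun (k : ℕ) (t : ℝ) => cf ν n k * (t ^ ((ν + n + k) - 1) * Real.exp (-t - x / t)))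
      (fun k _ => ((integrableOn_aux (ν + n + k) hx).const_mul _))]
  simp_rw [MeasureTheory.integral_const_mul]
  have := sum_cf_rho hν hx n
  rw [show ∑ k ∈ Finset.range (n + 1),
      cf ν n k * ∫ t in Set.Ioi (0:ℝ), t ^ ((ν + n + k) - 1) * Real.exp (-t - x / t)
      = ∑ k ∈ Finset.range (n + 1), cf ν n k * rho (ν + n + k) x from rfl, this]
end
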